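/- arXiv:2002.01363 — 8 statements merged into one kernel-verified Lean document; each statement's English description precedes it below -/
import Mathlib

section
/- Let b ≥ 2 be an integer and let p ≥ 5 be a prime number. Then there exist nonzero elements λ₁, …, λ_b, μ₁, …, μ_b of the field ℤ_p with p elements such that λ₁ + … + λ_b = 1, μ₁ + … + μ_b = 1, and λ_j · μ_j ≠ 1 for every j ∈ {1, …, b}. -/
/-!
Take `μ = λ`; since `ℤ_p` is a field, `λ_j² = 1` only for `λ_j = ±1`, so it suffices to find `b`
elements of `ℤ_p` outside `{0, 1, -1}` summing to `1`. Put an element `v` in `b - 2` coordinates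
and two elements `y`, `z` with `y + z = c := 1 - (b - 2) v` in the other two. For `p ≥ 7` take
`v = 2`; the pair exists because `{0, 1, -1}` and its reflection `c - {0, 1, -1}` together have
at most `6 < p` elements. For `p = 5` the triple `v, y, z` is found by inspection.
-/

theorem Finset.exists_add_eq_of_two_mul_card_lt {G : Type*} [AddGroup G] [Fintype G]
    [DecidableEq G] (S : Finset G) (hS : 2 * S.card < Fintype.card G) (c : G) :
    ∃ y z, y ∉ S ∧ z ∉ S ∧ y + z = c := by
  have hcard : (S ∪ S.image (c - ·)).card < (Finset.univ : Finset G).card :=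
    calc (S ∪ S.image (c - ·)).card ≤ S.card + S.card :=
          (card_union_le _ _).trans (Nat.add_le_add_left card_image_le _)
      _ < _ := by rw [card_univ]; omega
  obtain ⟨y, -, hy⟩ := exists_mem_notMem_of_card_lt_card hcard
  rw [mem_union, mem_image, not_or] at hy
  refine ⟨y, -y + c, hy.1, fun hz => hy.2 ⟨_, hz, ?_⟩, add_neg_cancel_left y c⟩
  simp [sub_eq_add_neg, ← add_assoc]

theorem ZMod.two_notMem_zero_one_neg_one {n : ℕ} (hn : 3 < n) :
    (2 : ZMod n) ∉ ({0, 1, -1} : Finset (ZMod n)) := by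
  have hcast : ∀ m < n, ((m : ℕ) : ZMod n) = 0 → m = 0 := fun m hm h =>
    Nat.eq_zero_of_dvd_of_lt ((ZMod.natCast_eq_zero_iff m n).mp h) hm
  simp only [Finset.mem_insert, Finset.mem_singleton, not_or]
  refine ⟨fun h => ?_, fun h => ?_, fun h => ?_⟩
  · exact absurd (hcast 2 (by omega) (by exact_mod_cast h)) (by norm_num)
  · exact absurd (hcast 1 (by omega) (by push_cast; linear_combination h)) (by norm_num)
  · exact absurd (hcast 3 hn (by push_cast; linear_combination h)) (by norm_num)

theorem ZMod.exists_add_add_nsmul_eq_one {n : ℕ} (hn : 5 ≤ n) (hn6 : n ≠ 6) (k : ℕ) :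
    ∃ v y z : ZMod n, v ∉ ({0, 1, -1} : Finset (ZMod n)) ∧
      y ∉ ({0, 1, -1} : Finset (ZMod n)) ∧ z ∉ ({0, 1, -1} : Finset (ZMod n)) ∧
      y + z + k • v = 1 := by
  obtain rfl | hn7 : n = 5 ∨ 7 ≤ n := by omega
  · have key : ∀ m : ZMod 5, ∃ v y z : ZMod 5, v ∉ ({0, 1, -1} : Finset (ZMod 5)) ∧
        y ∉ ({0, 1, -1} : Finset (ZMod 5)) ∧ z ∉ ({0, 1, -1} : Finset (ZMod 5)) ∧
        y + z + m * v = 1 := by decide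
    simpa only [nsmul_eq_mul] using key k
  · have : NeZero n := ⟨by omega⟩
    have hS : 2 * ({0, 1, -1} : Finset (ZMod n)).card < Fintype.card (ZMod n) := by
      have := Finset.card_le_three (a := (0 : ZMod n)) (b := 1) (c := -1)
      rw [ZMod.card]; omega
    obtain ⟨y, z, hy, hz, hyz⟩ := Finset.exists_add_eq_of_two_mul_card_lt _ hS (1 - k • 2)
    exact ⟨2, y, z, ZMod.two_notMem_zero_one_neg_one (by omega), hy, hz, by rw [hyz]; abel⟩

theorem Fin.exists_forall_sum_eq_add_add_nsmul {M : Type*} [AddCommMonoid M] (P : M → Prop)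
    {v y z : M} (hv : P v) (hy : P y) (hz : P z) (k : ℕ) :
    ∃ f : Fin (k + 2) → M, (∀ j, P (f j)) ∧ ∑ j, f j = y + z + k • v := by
  refine ⟨Fin.cons y (Fin.cons z fun _ => v), fun j => ?_, ?_⟩
  · exact Fin.cases hy (fun i => Fin.cases hz (fun _ => hv) i) j
  · simp [Fin.sum_cons, add_assoc]

/-- Lemma `lem:technical`: for `b ≥ 2` and a prime `p ≥ 5` there exist
nonzero `λ₁,…,λ_b, μ₁,…,μ_b ∈ ℤ_p` with `Σλ_j = Σμ_j = 1` and `λ_j μ_j ≠ 1` for all `j`. -/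
theorem stmt_0 (b p : ℕ) (hb : 2 ≤ b) (hp : p.Prime) (hp5 : 5 ≤ p) :
    ∃ lam mu : Fin b → ZMod p,
      (∀ j, lam j ≠ 0) ∧ (∀ j, mu j ≠ 0) ∧
      (∑ j, lam j) = 1 ∧ (∑ j, mu j) = 1 ∧
      (∀ j, lam j * mu j ≠ 1) := by
  have : Fact p.Prime := ⟨hp⟩
  obtain ⟨k, rfl⟩ : ∃ k, b = k + 2 := ⟨b - 2, by omega⟩
  have hp6 : p ≠ 6 := by rintro rfl; norm_num at hp
  obtain ⟨v, y, z, hv, hy, hz, hsum⟩ := ZMod.exists_add_add_nsmul_eq_one hp5 hp6 k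
  obtain ⟨lam, hlam, hlam_sum⟩ := Fin.exists_forall_sum_eq_add_add_nsmul (· ∉ ({0, 1, -1} : Finset (ZMod p))) hv hy hz k
  have hlam_ne : ∀ j, lam j ≠ 0 ∧ lam j * lam j ≠ 1 := fun j => by
    have := hlam j
    simp only [Finset.mem_insert, Finset.mem_singleton, not_or] at this
    exact ⟨this.1, fun h => (mul_self_eq_one_iff.mp h).elim this.2.1 this.2.2⟩
  exact ⟨lam, lam, fun j => (hlam_ne j).1, fun j => (hlam_ne j).1, hlam_sum.trans hsum,
    hlam_sum.trans hsum, fun j => (hlam_ne j).2⟩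
end

section
/- Let p be a prime, b ≥ 1 an integer, and λ₁, …, λ_b, μ₁, …, μ_b ∈ ℤ_p. Let Ω_b be the 4b × 4b matrix over ℤ_p given in 2b × 2b blocks by Ω_b = [[L_b, J_b], [J_b, M_b]], where L_b is block-diagonal with 2×2 diagonal blocks [[0, λ_j], [−λ_j, 0]] for j = 1, …, b, M_b is block-diagonal with 2×2 diagonal blocks [[0, μ_j], [−μ_j, 0]], and J_b is block-diagonal with 2×2 diagonal blocks [[0, −1], [1, 0]]. Then det Ω_b = ∏_{j=1}^b (1 − λ_j μ_j)². -/
open Matrix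

lemma det_four_block (R : Type*) [CommRing R] (l m : R) :
    (Matrix.fromBlocks !![0, l; -l, 0] !![0, -1; (1:R), 0]
      !![0, -1; (1:R), 0] !![0, m; -m, 0]).det = (1 - l * m) ^ 2 := by
  rw [← Matrix.det_submatrix_equiv_self finSumFinEquiv.symm]
  rw [show ((Matrix.fromBlocks !![0, l; -l, 0] !![0, -1; (1:R), 0]
      !![0, -1; (1:R), 0] !![0, m; -m, 0]).submatrix finSumFinEquiv.symm finSumFinEquiv.symm)
    = !![0, l, 0, -1; -l, 0, 1, 0; 0, -1, 0, m; 1, 0, -m, 0] from by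
      ext i j
      fin_cases i <;> fin_cases j <;> rfl]
  simp (config := { decide := true }) [Matrix.det_succ_row_zero, Fin.sum_univ_succ,
    Fin.succAbove, show (Fin.castSucc 2 : Fin 4) = 2 from rfl]
  ring

/-- equation `eq:determinant-Omega`: the determinant of the `4b × 4b`
block matrix `Ω_b = [[L_b, J_b], [J_b, M_b]]` over `ℤ_p` equals `∏ (1 - λ_j μ_j)²`.
The matrix is indexed by `(Fin 2 × Fin b) ⊕ (Fin 2 × Fin b)` so that each stated `2 × 2`
block occupies a consecutive pair of rows and columns. -/
theorem stmt_2 (p b : ℕ) (hp : p.Prime) (hb : 1 ≤ b)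
    (lam mu : Fin b → ZMod p) :
    (Matrix.fromBlocks
        (Matrix.blockDiagonal fun j : Fin b => !![0, lam j; -lam j, 0])
        (Matrix.blockDiagonal fun _ : Fin b => !![0, -1; (1 : ZMod p), 0])
        (Matrix.blockDiagonal fun _ : Fin b => !![0, -1; (1 : ZMod p), 0])
        (Matrix.blockDiagonal fun j : Fin b => !![0, mu j; -mu j, 0])).det
      = ∏ j : Fin b, (1 - lam j * mu j) ^ 2 := by
  let e : (Fin 2 × Fin b) ⊕ (Fin 2 × Fin b) ≃ (Fin 2 ⊕ Fin 2) × Fin b :=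
    (Equiv.sumProdDistrib (Fin 2) (Fin 2) (Fin b)).symm
  have key : (Matrix.fromBlocks
        (Matrix.blockDiagonal fun j : Fin b => !![0, lam j; -lam j, 0])
        (Matrix.blockDiagonal fun _ : Fin b => !![0, -1; (1 : ZMod p), 0])
        (Matrix.blockDiagonal fun _ : Fin b => !![0, -1; (1 : ZMod p), 0])
        (Matrix.blockDiagonal fun j : Fin b => !![0, mu j; -mu j, 0]))
      = (Matrix.blockDiagonal fun j : Fin b =>
          Matrix.fromBlocks !![0, lam j; -lam j, 0] !![0, -1; (1 : ZMod p), 0]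
            !![0, -1; (1 : ZMod p), 0] !![0, mu j; -mu j, 0]).submatrix e e := by
    ext i j
    rcases i with ⟨ii, ij⟩ | ⟨ii, ij⟩ <;> rcases j with ⟨ji, jj⟩ | ⟨ji, jj⟩ <;>
      simp [e, Matrix.blockDiagonal_apply, Matrix.fromBlocks, Equiv.sumProdDistrib]
  rw [key, Matrix.det_submatrix_equiv_self, Matrix.det_blockDiagonal]
  exact Finset.prod_congr rfl fun j _ => det_four_block _ _ _
end

section
/- Let p be an odd prime, n ≥ 1 an integer, and A = (a_{jk}) an antisymmetric 2n × 2n matrix over ℤ_p with det A ≠ 0. Let G(A) be the group with presentation on generators x₁, …, x_{2n}, z and relations x_j^p = 1 for j = 1, …, 2n−2, x_{2n−1}^p = x_{2n}^p = z, z^p = 1, [x_j, z] = 1 for all j, and [x_j, x_k] = z^{a_{jk}} for all j, k (where the exponent is any integer representative of a_{jk} ∈ ℤ_p). Then G(A) is an extra-special p-group of order p^{2n+1} and of exponent p². -/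
open Matrix
open scoped commutatorElement

/-- A finite `p`-group `G` is *extra-special* if its center is cyclic of order `p` and the
quotient `G/Z(G)` is a nontrivial elementary abelian `p`-group. -/
def IsExtraSpecial (p : ℕ) (G : Type*) [Group G] : Prop :=
  IsPGroup p G ∧
  IsCyclic (Subgroup.center G) ∧
  Nat.card (Subgroup.center G) = p ∧
  Nontrivial (G ⧸ Subgroup.center G) ∧
  (∀ x y : G ⧸ Subgroup.center G, x * y = y * x) ∧
  (∀ x : G ⧸ Subgroup.center G, x ^ p = 1)

/-- The defining relations of the group `G(A)`: generators `x₁, …, x_{2n}` (the summand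
`Fin (2*n)`, zero-based) and `z` (the summand `Unit`), with relations `x_j^p = 1` for
`j = 1, …, 2n-2`, `x_{2n-1}^p = x_{2n}^p = z`, `z^p = 1`, `[x_j, z] = 1` and
`[x_j, x_k] = z^{a_{jk}}`. -/
def GRels (p n : ℕ) (A : Matrix (Fin (2 * n)) (Fin (2 * n)) (ZMod p)) :
    Set (FreeGroup (Fin (2 * n) ⊕ Unit)) :=
  (Set.range fun j : Fin (2 * n) =>
    if (j : ℕ) < 2 * n - 2 then FreeGroup.of (Sum.inl j) ^ p
    else FreeGroup.of (Sum.inl j) ^ p * (FreeGroup.of (Sum.inr ()))⁻¹) ∪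
  {FreeGroup.of (Sum.inr ()) ^ p} ∪
  (Set.range fun j : Fin (2 * n) =>
    ⁅(FreeGroup.of (Sum.inl j) : FreeGroup (Fin (2 * n) ⊕ Unit)),
        FreeGroup.of (Sum.inr ())⁆) ∪
  (Set.range fun jk : Fin (2 * n) × Fin (2 * n) =>
    ⁅(FreeGroup.of (Sum.inl jk.1) : FreeGroup (Fin (2 * n) ⊕ Unit)),
        FreeGroup.of (Sum.inl jk.2)⁆ *
      FreeGroup.of (Sum.inr ()) ^ (-(((A jk.1 jk.2).val : ℤ))))


namespace Stmt4

variable {p n : ℕ}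

def dl (p : ℕ) (a b : ZMod p) : ZMod p := (((a.val + b.val) / p : ℕ) : ZMod p)

lemma dl_comm (a b : ZMod p) : dl p a b = dl p b a := by unfold dl; rw [Nat.add_comm]

lemma dl_zero_right [NeZero p] (a : ZMod p) : dl p a 0 = 0 := by
  unfold dl
  rw [ZMod.val_zero, Nat.add_zero, Nat.div_eq_of_lt (ZMod.val_lt a)]
  simp

lemma dl_zero_left [NeZero p] (a : ZMod p) : dl p 0 a = 0 := by rw [dl_comm, dl_zero_right]

lemma dl_key [NeZero p] (a b : ZMod p) :
    p * ((a.val + b.val) / p) + (a + b).val = a.val + b.val := by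
  rw [ZMod.val_add]; exact Nat.div_add_mod _ _

lemma dl_cocycle [NeZero p] (a b c : ZMod p) :
    dl p a b + dl p (a + b) c = dl p b c + dl p a (b + c) := by
  have hp : 0 < p := NeZero.pos p
  have e1 := dl_key a b
  have e2 := dl_key (a + b) c
  have e3 := dl_key b c
  have e4 := dl_key a (b + c)
  rw [← add_assoc] at e4
  unfold dl
  rw [← Nat.cast_add, ← Nat.cast_add]
  congr 1
  apply Nat.eq_of_mul_eq_mul_left hp
  have e1' := congrArg (fun x : ℕ => (x : ℤ)) e1
  have e2' := congrArg (fun x : ℕ => (x : ℤ)) e2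
  have e3' := congrArg (fun x : ℕ => (x : ℤ)) e3
  have e4' := congrArg (fun x : ℕ => (x : ℤ)) e4
  push_cast at e1' e2' e3' e4' ⊢
  nlinarith [e1', e2', e3', e4']

/-- the coefficient: generators with index `≥ 2n-2` have `x^p = z`. -/
def cc (n : ℕ) (j : Fin (2 * n)) : ℕ := if (j : ℕ) < 2 * n - 2 then 0 else 1

variable (A : Matrix (Fin (2 * n)) (Fin (2 * n)) (ZMod p))

/-- bilinear form -/
def Bf (v w : Fin (2 * n) → ZMod p) : ZMod p := (2 : ZMod p)⁻¹ * (v ⬝ᵥ A *ᵥ w)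

/-- carry cocycle -/
def kp (p n : ℕ) (v w : Fin (2 * n) → ZMod p) : ZMod p :=
  ∑ j, (cc n j : ZMod p) * dl p (v j) (w j)

lemma Bf_add_left (v v' w : Fin (2 * n) → ZMod p) :
    Bf A (v + v') w = Bf A v w + Bf A v' w := by
  unfold Bf; rw [add_dotProduct]; ring

lemma Bf_add_right (v w w' : Fin (2 * n) → ZMod p) :
    Bf A v (w + w') = Bf A v w + Bf A v w' := by
  unfold Bf; rw [mulVec_add, dotProduct_add]; ring

lemma Bf_zero_left (w : Fin (2 * n) → ZMod p) : Bf A 0 w = 0 := by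
  unfold Bf; rw [zero_dotProduct]; ring

lemma Bf_zero_right (v : Fin (2 * n) → ZMod p) : Bf A v 0 = 0 := by
  unfold Bf; rw [mulVec_zero, dotProduct_zero]; ring

lemma Bf_neg_left (v w : Fin (2 * n) → ZMod p) : Bf A (-v) w = - Bf A v w := by
  unfold Bf; rw [neg_dotProduct]; ring

lemma Bf_neg_right (v w : Fin (2 * n) → ZMod p) : Bf A v (-w) = - Bf A v w := by
  unfold Bf; rw [mulVec_neg, dotProduct_neg]; ring

lemma kp_comm (v w : Fin (2 * n) → ZMod p) : kp p n v w = kp p n w v := by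
  unfold kp; exact Finset.sum_congr rfl fun j _ => by rw [dl_comm]

lemma kp_zero_left [NeZero p] (w : Fin (2 * n) → ZMod p) : kp p n 0 w = 0 := by
  unfold kp
  refine Finset.sum_eq_zero fun j _ => ?_
  rw [Pi.zero_apply, dl_zero_left, mul_zero]

lemma kp_zero_right [NeZero p] (v : Fin (2 * n) → ZMod p) : kp p n v 0 = 0 := by
  rw [kp_comm]; exact kp_zero_left v

lemma kp_cocycle [NeZero p] (u v w : Fin (2 * n) → ZMod p) :
    kp p n u v + kp p n (u + v) w = kp p n v w + kp p n u (v + w) := by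
  unfold kp
  rw [← Finset.sum_add_distrib, ← Finset.sum_add_distrib]
  refine Finset.sum_congr rfl fun j _ => ?_
  have := dl_cocycle (u j) (v j) (w j)
  simp only [Pi.add_apply]
  linear_combination (cc n j : ZMod p) * this

/-- The model group: carrier. -/
@[ext]
structure Mdl (p n : ℕ) (A : Matrix (Fin (2 * n)) (Fin (2 * n)) (ZMod p)) where
  v : Fin (2 * n) → ZMod p
  s : ZMod p

namespace Mdl

variable {A}

instance [NeZero p] : Group (Mdl p n A) where
  mul g h := ⟨g.v + h.v, g.s + h.s + Bf A g.v h.v + kp p n g.v h.v⟩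
  one := ⟨0, 0⟩
  inv g := ⟨-g.v, -g.s - Bf A (-g.v) g.v - kp p n (-g.v) g.v⟩
  mul_assoc g h k := by
    refine Mdl.ext ?_ ?_
    · exact add_assoc _ _ _
    · show (g.s + h.s + Bf A g.v h.v + kp p n g.v h.v) + k.s
          + Bf A (g.v + h.v) k.v + kp p n (g.v + h.v) k.v
        = g.s + (h.s + k.s + Bf A h.v k.v + kp p n h.v k.v)
          + Bf A g.v (h.v + k.v) + kp p n g.v (h.v + k.v)
      rw [Bf_add_left, Bf_add_right]
      linear_combination kp_cocycle g.v h.v k.v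
  one_mul g := by
    refine Mdl.ext (zero_add _) ?_
    show (0 : ZMod p) + g.s + Bf A 0 g.v + kp p n 0 g.v = g.s
    rw [Bf_zero_left, kp_zero_left]; ring
  mul_one g := by
    refine Mdl.ext (add_zero _) ?_
    show g.s + (0 : ZMod p) + Bf A g.v 0 + kp p n g.v 0 = g.s
    rw [Bf_zero_right, kp_zero_right]; ring
  inv_mul_cancel g := by
    refine Mdl.ext (neg_add_cancel _) ?_
    show (-g.s - Bf A (-g.v) g.v - kp p n (-g.v) g.v) + g.s
        + Bf A (-g.v) g.v + kp p n (-g.v) g.v = 0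
    ring

variable [NeZero p]

lemma mul_def (g h : Mdl p n A) :
    g * h = ⟨g.v + h.v, g.s + h.s + Bf A g.v h.v + kp p n g.v h.v⟩ := rfl

lemma one_def : (1 : Mdl p n A) = ⟨0, 0⟩ := rfl

lemma inv_def (g : Mdl p n A) :
    g⁻¹ = ⟨-g.v, -g.s - Bf A (-g.v) g.v - kp p n (-g.v) g.v⟩ := rfl

@[simp] lemma mul_v (g h : Mdl p n A) : (g * h).v = g.v + h.v := rfl
@[simp] lemma one_v : (1 : Mdl p n A).v = 0 := rfl
@[simp] lemma inv_v (g : Mdl p n A) : (g⁻¹).v = -g.v := rfl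

lemma pow_v (g : Mdl p n A) (k : ℕ) : (g ^ k).v = k • g.v := by
  induction k with
  | zero => simp
  | succ k ih => rw [pow_succ, mul_v, ih, succ_nsmul]

lemma zmul (a b : ZMod p) :
    (⟨0, a⟩ : Mdl p n A) * ⟨0, b⟩ = ⟨0, a + b⟩ := by
  rw [mul_def]
  refine Mdl.ext (by simp) ?_
  show a + b + Bf A 0 0 + kp p n 0 0 = a + b
  rw [Bf_zero_left, kp_zero_left]; ring

lemma zpow (a : ZMod p) (k : ℕ) :
    (⟨0, a⟩ : Mdl p n A) ^ k = ⟨0, (k : ZMod p) * a⟩ := by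
  induction k with
  | zero => rw [pow_zero, one_def]; norm_num
  | succ k ih =>
    rw [pow_succ, ih, zmul]
    congr 1
    push_cast
    ring

/-- the generators of the model -/
def xg (j : Fin (2 * n)) : Mdl p n A := ⟨Pi.single j 1, 0⟩
def zg : Mdl p n A := ⟨0, 1⟩

lemma zg_pow (k : ℕ) : (zg : Mdl p n A) ^ k = ⟨0, (k : ZMod p)⟩ := by
  rw [zg, zpow, mul_one]

lemma zg_pow_p : (zg : Mdl p n A) ^ p = 1 := by
  rw [zg_pow, ZMod.natCast_self, one_def]

lemma Bf_single_single (j k : Fin (2 * n)) (a b : ZMod p) :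
    Bf A (Pi.single j a) (Pi.single k b) = (2 : ZMod p)⁻¹ * (a * (A j k * b)) := by
  unfold Bf
  rw [mulVec_single, single_dotProduct]
  rfl

lemma kp_single_single (j : Fin (2 * n)) (a b : ZMod p) :
    kp p n (Pi.single j a) (Pi.single j b) = (cc n j : ZMod p) * dl p a b := by
  unfold kp
  rw [Fintype.sum_eq_single j]
  · rw [Pi.single_eq_same, Pi.single_eq_same]
  · intro i hi
    rw [Pi.single_eq_of_ne hi, Pi.single_eq_of_ne hi, dl_zero_left, mul_zero]

section withA

variable (hp : p.Prime) (hodd : Odd p) (hA : Aᵀ = -A)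
include hp hodd hA

lemma diag_zero (j : Fin (2 * n)) : A j j = 0 := by
  haveI : Fact p.Prime := ⟨hp⟩
  have h : A j j = - A j j := by
    have := congrFun (congrFun hA j) j
    rwa [transpose_apply, neg_apply] at this
  have h2 : (2 : ZMod p) * A j j = 0 := by linear_combination h
  rcases mul_eq_zero.mp h2 with h3 | h3
  · exfalso
    have h4 : ((2 : ℕ) : ZMod p) = 0 := by exact_mod_cast h3
    rw [ZMod.natCast_eq_zero_iff] at h4
    have := (Nat.prime_dvd_prime_iff_eq hp Nat.prime_two).mp h4
    rcases hodd with ⟨m, hm⟩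
    omega
  · exact h3

lemma xg_pow (j : Fin (2 * n)) :
    ∀ k, k ≤ p → (xg j : Mdl p n A) ^ k
      = ⟨Pi.single j (k : ZMod p), if k = p then (cc n j : ZMod p) else 0⟩ := by
  intro k
  induction k with
  | zero =>
    intro _
    rw [pow_zero, one_def]
    have : (0 : ℕ) ≠ p := (NeZero.ne' p)
    simp [this]
  | succ k ih =>
    intro hk1
    have hkp : k < p := hk1
    rw [pow_succ, ih (le_of_lt hkp), xg, mul_def]
    have hkne : k ≠ p := Nat.ne_of_lt hkp
    haveI : Fact (1 < p) := ⟨hp.one_lt⟩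
    have hone : (1 : ZMod p).val = 1 := ZMod.val_one p
    have hdl : dl p ((k : ℕ) : ZMod p) (1 : ZMod p) = if k + 1 = p then 1 else 0 := by
      unfold dl
      rw [ZMod.val_natCast_of_lt hkp, hone]
      rcases Nat.lt_or_ge (k + 1) p with h | h
      · rw [Nat.div_eq_of_lt h, if_neg (Nat.ne_of_lt h)]
        simp
      · have heq : k + 1 = p := le_antisymm hk1 h
        rw [heq, Nat.div_self (NeZero.pos p), if_pos rfl]
        simp
    refine Mdl.ext ?_ ?_ <;> dsimp only
    · rw [← Pi.single_add]
      congr 1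
      push_cast
      ring
    · rw [if_neg hkne, Bf_single_single, diag_zero hp hodd hA, kp_single_single, hdl]
      by_cases hc : k + 1 = p <;> simp [hc]

end withA

lemma mul_inv_same_v (g h : Mdl p n A) (hv : g.v = h.v) : g * h⁻¹ = ⟨0, g.s - h.s⟩ := by
  rw [inv_def, mul_def]
  refine Mdl.ext ?_ ?_ <;> dsimp only
  · rw [hv, add_neg_cancel]
  · rw [hv, Bf_neg_left, Bf_neg_right, kp_comm h.v (-h.v)]
    ring

lemma xg_p_eq (hp : p.Prime) (hodd : Odd p) (hA : Aᵀ = -A) (j : Fin (2 * n)) :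
    (xg j : Mdl p n A) ^ p = ⟨0, (cc n j : ZMod p)⟩ := by
  rw [xg_pow hp hodd hA j p le_rfl, if_pos rfl, ZMod.natCast_self, Pi.single_zero]

lemma pow_p_v (g : Mdl p n A) : (g ^ p).v = 0 := by
  rw [pow_v]
  funext j
  simp [ZMod.natCast_self]

lemma exp_sq (g : Mdl p n A) : g ^ (p * p) = 1 := by
  rw [pow_mul]
  have h1 : g ^ p = ⟨0, (g ^ p).s⟩ := Mdl.ext (pow_p_v g) rfl
  rw [h1, zpow, ZMod.natCast_self, zero_mul, one_def]

section withA2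

variable (hp : p.Prime) (hodd : Odd p) (hA : Aᵀ = -A)
include hp hodd hA

lemma two_ne : (2 : ZMod p) ≠ 0 := by
  intro h3
  have h4 : ((2 : ℕ) : ZMod p) = 0 := by exact_mod_cast h3
  rw [ZMod.natCast_eq_zero_iff] at h4
  have := (Nat.prime_dvd_prime_iff_eq hp Nat.prime_two).mp h4
  rcases hodd with ⟨m, hm⟩
  omega

lemma Bf_sub (v w : Fin (2 * n) → ZMod p) :
    Bf A v w - Bf A w v = v ⬝ᵥ A *ᵥ w := by
  haveI : Fact p.Prime := ⟨hp⟩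
  have h1 : w ⬝ᵥ A *ᵥ v = -(v ⬝ᵥ A *ᵥ w) := by
    calc w ⬝ᵥ A *ᵥ v = (w ᵥ* A) ⬝ᵥ v := dotProduct_mulVec w A v
    _ = (w ᵥ* Aᵀᵀ) ⬝ᵥ v := by rw [transpose_transpose]
    _ = (Aᵀ *ᵥ w) ⬝ᵥ v := by rw [vecMul_transpose]
    _ = ((-A) *ᵥ w) ⬝ᵥ v := by rw [hA]
    _ = -((A *ᵥ w) ⬝ᵥ v) := by rw [neg_mulVec, neg_dotProduct]
    _ = -(v ⬝ᵥ A *ᵥ w) := by rw [dotProduct_comm]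
  have h2 : (2 : ZMod p)⁻¹ * 2 = 1 := inv_mul_cancel₀ (two_ne hp hodd hA)
  unfold Bf
  rw [h1]
  linear_combination (v ⬝ᵥ A *ᵥ w) * h2

lemma comm_eq (g h : Mdl p n A) : ⁅g, h⁆ = ⟨0, g.v ⬝ᵥ A *ᵥ h.v⟩ := by
  have e1 : ⁅g, h⁆ = (g * h) * (h * g)⁻¹ := by
    rw [commutatorElement_def, _root_.mul_inv_rev, ← mul_assoc]
  rw [e1, mul_inv_same_v (g * h) (h * g) (add_comm g.v h.v)]
  refine Mdl.ext rfl ?_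
  show (g * h).s - (h * g).s = g.v ⬝ᵥ A *ᵥ h.v
  rw [mul_def, mul_def]
  dsimp only
  linear_combination Bf_sub hp hodd hA g.v h.v + kp_comm g.v h.v

lemma mem_center_iff (hdet : A.det ≠ 0) (g : Mdl p n A) :
    g ∈ Subgroup.center (Mdl p n A) ↔ g.v = 0 := by
  haveI : Fact p.Prime := ⟨hp⟩
  constructor
  · intro hg
    have hcomm := Subgroup.mem_center_iff.mp hg
    have hvm : g.v ᵥ* A = 0 := by
      funext k
      have h1 : ⁅g, (xg k : Mdl p n A)⁆ = 1 :=
        commutatorElement_eq_one_iff_commute.mpr (hcomm (xg k)).symm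
      rw [comm_eq hp hodd hA] at h1
      have h2 := congrArg Mdl.s h1
      dsimp only at h2
      rw [one_def] at h1
      have h3 := congrArg Mdl.s h1
      dsimp only at h3
      rw [xg] at h3
      dsimp only at h3
      rw [dotProduct_mulVec, dotProduct_single, mul_one] at h3
      exact h3
    have hU : IsUnit A.det := isUnit_iff_ne_zero.mpr hdet
    calc g.v = g.v ᵥ* (1 : Matrix (Fin (2 * n)) (Fin (2 * n)) (ZMod p)) := (vecMul_one _).symm
    _ = g.v ᵥ* (A * A⁻¹) := by rw [mul_nonsing_inv A hU]
    _ = (g.v ᵥ* A) ᵥ* A⁻¹ := by rw [vecMul_vecMul]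
    _ = (0 : Fin (2 * n) → ZMod p) ᵥ* A⁻¹ := by rw [hvm]
    _ = 0 := zero_vecMul _
  · intro hgv
    rw [Subgroup.mem_center_iff]
    intro h
    rw [mul_def, mul_def]
    refine Mdl.ext ?_ ?_ <;> dsimp only <;> rw [hgv]
    · rw [add_zero, zero_add]
    · rw [Bf_zero_left, Bf_zero_right, kp_zero_left, kp_zero_right]
      ring

end withA2

def prodEquiv : Mdl p n A ≃ (Fin (2 * n) → ZMod p) × ZMod p where
  toFun g := (g.v, g.s)
  invFun x := ⟨x.1, x.2⟩
  left_inv g := rfl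
  right_inv x := rfl

instance : Finite (Mdl p n A) := Finite.of_equiv _ (prodEquiv (p := p) (n := n) (A := A)).symm

lemma card_eq : Nat.card (Mdl p n A) = p ^ (2 * n + 1) := by
  rw [Nat.card_congr (prodEquiv (p := p) (n := n) (A := A)), Nat.card_prod, Nat.card_fun,
    Nat.card_zmod, Nat.card_eq_fintype_card, Fintype.card_fin, pow_succ]

end Mdl

section Generic

variable {G : Type*} [Group G] {z : G} (hz : ∀ g : G, Commute z g)
include hz

lemma zshift (t : ℕ) (g : G) : g * z ^ t = z ^ t * g := ((hz g).pow_left t).eq.symm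

lemma zpull (t : ℕ) (g h : G) : g * (z ^ t * h) = z ^ t * (g * h) := by
  rw [← mul_assoc, zshift hz, mul_assoc]

lemma gen_powComm {x y : G} {a : ℕ} (h : x * y = z ^ a * (y * x)) :
    ∀ m, x ^ m * y = z ^ (m * a) * (y * x ^ m) := by
  intro m
  induction m with
  | zero => simp
  | succ m ih =>
    have h1 : x ^ (m + 1) * y = x * (x ^ m * y) := by rw [pow_succ', mul_assoc]
    rw [h1, ih, zpull hz, ← mul_assoc x y, h, mul_assoc (z ^ a), zpull hz, ← mul_assoc,
      ← pow_add]
    have h2 : a + m * a = (m + 1) * a := by ring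
    rw [h2, mul_assoc y x, ← pow_succ']

lemma gen_listComm (y : G) : ∀ (l : List (G × ℕ)),
    (∀ q ∈ l, q.1 * y = z ^ q.2 * (y * q.1)) →
    (l.map Prod.fst).prod * y
      = z ^ ((l.map Prod.snd).sum) * (y * (l.map Prod.fst).prod) := by
  intro l
  induction l with
  | nil => intro _; simp
  | cons q l ih =>
    intro hq
    have hql := hq q List.mem_cons_self
    have ih' := ih fun r hr => hq r (List.mem_cons_of_mem q hr)
    simp only [List.map_cons, List.prod_cons, List.sum_cons]
    rw [mul_assoc, ih', zpull hz, ← mul_assoc q.1 y, hql, mul_assoc (z ^ q.2), zpull hz,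
      ← mul_assoc, ← pow_add, mul_assoc y q.1]


lemma gen_assemble (y t1 t2 x w : G) (a b : ℕ)
    (h2 : t2 * y = z ^ a * (y * t2))
    (h1 : x * y = z ^ b * w) :
    (t1 * (x * t2)) * y = z ^ (a + b) * (t1 * (w * t2)) := by
  rw [mul_assoc, mul_assoc, h2, zpull hz, zpull hz, ← mul_assoc x y, h1, mul_assoc (z ^ b),
    zpull hz, ← mul_assoc, ← pow_add]

end Generic

section PGside

variable (p n : ℕ) (A : Matrix (Fin (2 * n)) (Fin (2 * n)) (ZMod p))

def Xg (j : Fin (2 * n)) : PresentedGroup (GRels p n A) := PresentedGroup.of (Sum.inl j)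
def Zg : PresentedGroup (GRels p n A) := PresentedGroup.of (Sum.inr ())

lemma relOne (r : FreeGroup (Fin (2 * n) ⊕ Unit)) (hr : r ∈ GRels p n A) :
    PresentedGroup.mk (GRels p n A) r = 1 :=
  (QuotientGroup.eq_one_iff r).mpr (Subgroup.subset_normalClosure hr)

lemma hZp : Zg p n A ^ p = 1 := by
  have hm : FreeGroup.of (Sum.inr () : Fin (2 * n) ⊕ Unit) ^ p ∈ GRels p n A :=
    Set.mem_union_left _ (Set.mem_union_left _ (Set.mem_union_right _ rfl))
  have := relOne p n A _ hm
  rwa [map_pow] at this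

lemma hXp (j : Fin (2 * n)) : Xg p n A j ^ p = Zg p n A ^ (cc n j) := by
  have hm : (if (j : ℕ) < 2 * n - 2 then FreeGroup.of (Sum.inl j : Fin (2 * n) ⊕ Unit) ^ p
      else FreeGroup.of (Sum.inl j : Fin (2 * n) ⊕ Unit) ^ p
        * (FreeGroup.of (Sum.inr () : Fin (2 * n) ⊕ Unit))⁻¹) ∈ GRels p n A :=
    Set.mem_union_left _ (Set.mem_union_left _ (Set.mem_union_left _ ⟨j, rfl⟩))
  have h := relOne p n A _ hm
  by_cases hj : (j : ℕ) < 2 * n - 2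
  · rw [if_pos hj] at h
    rw [map_pow] at h
    rw [show cc n j = 0 from if_pos hj, pow_zero]
    exact h
  · rw [if_neg hj] at h
    rw [_root_.map_mul, map_pow, map_inv] at h
    rw [show cc n j = 1 from if_neg hj, pow_one]
    exact mul_inv_eq_one.mp h

lemma hXZ (j : Fin (2 * n)) : Commute (Xg p n A j) (Zg p n A) := by
  have hm : ⁅(FreeGroup.of (Sum.inl j) : FreeGroup (Fin (2 * n) ⊕ Unit)),
      FreeGroup.of (Sum.inr ())⁆ ∈ GRels p n A :=
    Set.mem_union_left _ (Set.mem_union_right _ ⟨j, rfl⟩)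
  have h := relOne p n A _ hm
  rw [map_commutatorElement] at h
  exact commutatorElement_eq_one_iff_commute.mp h

lemma hXX (j k : Fin (2 * n)) :
    Xg p n A j * Xg p n A k = Zg p n A ^ ((A j k).val) * (Xg p n A k * Xg p n A j) := by
  have hm : ⁅(FreeGroup.of (Sum.inl j) : FreeGroup (Fin (2 * n) ⊕ Unit)),
        FreeGroup.of (Sum.inl k)⁆ *
      FreeGroup.of (Sum.inr ()) ^ (-(((A j k).val : ℤ))) ∈ GRels p n A :=
    Set.mem_union_right _ ⟨(j, k), rfl⟩
  have h := relOne p n A _ hm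
  rw [_root_.map_mul, map_commutatorElement, map_zpow, _root_.zpow_neg] at h
  have hc : ⁅Xg p n A j, Xg p n A k⁆ = (PresentedGroup.mk (GRels p n A)
      (FreeGroup.of (Sum.inr ()))) ^ (((A j k).val : ℤ)) := mul_inv_eq_one.mp h
  rw [zpow_natCast] at hc
  have hgoal : Xg p n A j * Xg p n A k = ⁅Xg p n A j, Xg p n A k⁆ * (Xg p n A k * Xg p n A j) := by
    rw [commutatorElement_def]
    group
  rw [hgoal, hc]
  rfl

lemma hZc : ∀ g : PresentedGroup (GRels p n A), Commute (Zg p n A) g := by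
  intro g
  have hsub : Subgroup.closure (Set.range (PresentedGroup.of :
      (Fin (2 * n) ⊕ Unit) → PresentedGroup (GRels p n A))) = ⊤ :=
    PresentedGroup.closure_range_of _
  have hle : Subgroup.closure (Set.range (PresentedGroup.of :
      (Fin (2 * n) ⊕ Unit) → PresentedGroup (GRels p n A)))
      ≤ Subgroup.centralizer {Zg p n A} := by
    rw [Subgroup.closure_le]
    rintro _ ⟨x, rfl⟩
    rw [SetLike.mem_coe, Subgroup.mem_centralizer_iff]
    rintro y hy
    rw [Set.mem_singleton_iff] at hy
    subst hy
    cases x with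
    | inl j => exact ((hXZ p n A j).symm).eq
    | inr u => rfl
  have hg : g ∈ Subgroup.centralizer {Zg p n A} := hle (hsub ▸ Subgroup.mem_top g)
  exact (Subgroup.mem_centralizer_iff.mp hg (Zg p n A) rfl)

end PGside

section NormalForm

variable (p n : ℕ) (A : Matrix (Fin (2 * n)) (Fin (2 * n)) (ZMod p))

/-- normal form map -/
def Th (g : Mdl p n A) : PresentedGroup (GRels p n A) :=
  ((List.finRange (2 * n)).map (fun j => Xg p n A j ^ (g.v j).val)).prod * Zg p n A ^ g.s.val

lemma Zg_pow_mod (a b : ℕ) (h : a % p = b % p) : Zg p n A ^ a = Zg p n A ^ b := by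
  have key : ∀ m : ℕ, Zg p n A ^ m = Zg p n A ^ (m % p) := by
    intro m
    conv_lhs => rw [← Nat.div_add_mod m p]
    rw [pow_add, pow_mul, hZp, one_pow, one_mul]
  rw [key a, key b, h]

lemma bump (hp : p.Prime) (k : Fin (2 * n)) (c : ZMod p) :
    Xg p n A k ^ c.val * Xg p n A k
      = Zg p n A ^ (if c.val + 1 = p then cc n k else 0) * Xg p n A k ^ ((c + 1).val) := by
  haveI : NeZero p := ⟨hp.pos.ne'⟩
  haveI : Fact (1 < p) := ⟨hp.one_lt⟩
  have hc1 : (c + 1).val = (c.val + 1) % p := by rw [ZMod.val_add, ZMod.val_one]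
  rw [← pow_succ]
  rcases (show c.val + 1 = p ∨ c.val + 1 < p by have := ZMod.val_lt c; omega) with heq | hlt
  · rw [if_pos heq, heq, hXp, hc1, heq, Nat.mod_self, pow_zero, mul_one]
  · rw [if_neg (Nat.ne_of_lt hlt), hc1, Nat.mod_eq_of_lt hlt, pow_zero, one_mul, pow_succ]

lemma finRange_split {N : ℕ} (k : Fin N) :
    List.finRange N = (List.finRange N).take (k : ℕ)
      ++ k :: (List.finRange N).drop ((k : ℕ) + 1) := by
  have hlen : (k : ℕ) < (List.finRange N).length := by simp [k.isLt]
  conv_lhs => rw [← List.take_append_drop (k : ℕ) (List.finRange N)]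
  congr 1
  rw [List.drop_eq_getElem_cons hlen]
  congr 1
  simp

lemma not_mem_take_drop {N : ℕ} (k : Fin N) :
    k ∉ (List.finRange N).take (k : ℕ)
      ∧ k ∉ (List.finRange N).drop ((k : ℕ) + 1) := by
  have hnd := List.nodup_finRange N
  rw [finRange_split k] at hnd
  rw [List.nodup_append] at hnd
  obtain ⟨h1, h2, h3⟩ := hnd
  constructor
  · intro hk
    exact h3 k hk k List.mem_cons_self rfl
  · exact (List.nodup_cons.mp h2).1

lemma mulX (hp : p.Prime) (g : Mdl p n A) (k : Fin (2 * n)) :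
    ∃ g' : Mdl p n A, Th p n A g' = Th p n A g * Xg p n A k := by
  haveI : NeZero p := ⟨hp.pos.ne'⟩
  have hz := hZc p n A
  set f : Fin (2 * n) → PresentedGroup (GRels p n A) :=
    fun j => Xg p n A j ^ (g.v j).val with hf
  set T := (List.finRange (2 * n)).take (k : ℕ) with hT
  set D := (List.finRange (2 * n)).drop ((k : ℕ) + 1) with hD
  have hDcomm : (D.map f).prod * Xg p n A k
      = Zg p n A ^ ((D.map (fun j => (g.v j).val * (A j k).val)).sum)
        * (Xg p n A k * (D.map f).prod) := by
    have hgen := gen_listComm hz (Xg p n A k)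
      (D.map (fun j => (f j, (g.v j).val * (A j k).val)))
      (by
        rintro q hq
        rw [List.mem_map] at hq
        obtain ⟨j, hj, rfl⟩ := hq
        exact gen_powComm hz (hXX p n A j k) ((g.v j).val))
    simpa [List.map_map, Function.comp_def] using hgen
  have hbump := bump p n A hp k (g.v k)
  set e3 : ℕ := if (g.v k).val + 1 = p then cc n k else 0 with he3
  set E2 : ℕ := (D.map (fun j => (g.v j).val * (A j k).val)).sum with hE2
  have hasm := gen_assemble hz (Xg p n A k) ((T.map f).prod) ((D.map f).prod) (f k)
      (Xg p n A k ^ ((g.v k + 1).val)) E2 e3 hDcomm hbump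
  set v' : Fin (2 * n) → ZMod p := Function.update g.v k (g.v k + 1) with hv'
  refine ⟨⟨v', g.s + ((E2 + e3 : ℕ) : ZMod p)⟩, ?_⟩
  have hP : ((List.finRange (2 * n)).map f).prod
      = (T.map f).prod * (f k * (D.map f).prod) := by
    conv_lhs => rw [finRange_split k]
    rw [List.map_append, List.prod_append, List.map_cons, List.prod_cons]
  have hmapT : T.map (fun j => Xg p n A j ^ (v' j).val) = T.map f := by
    refine List.map_congr_left ?_
    intro j hj
    have hjk : j ≠ k := by
      intro h
      subst h
      exact (not_mem_take_drop j).1 hj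
    rw [hv', Function.update_of_ne hjk]
  have hmapD : D.map (fun j => Xg p n A j ^ (v' j).val) = D.map f := by
    refine List.map_congr_left ?_
    intro j hj
    have hjk : j ≠ k := by
      intro h
      subst h
      exact (not_mem_take_drop j).2 hj
    rw [hv', Function.update_of_ne hjk]
  have hvk : v' k = g.v k + 1 := by rw [hv', Function.update_self]
  -- LHS : Th g' 
  have hzpow : Zg p n A ^ ((g.s + ((E2 + e3 : ℕ) : ZMod p)).val)
      = Zg p n A ^ ((E2 + e3) + g.s.val) := by
    apply Zg_pow_mod
    rw [ZMod.val_add, ZMod.val_natCast, Nat.mod_mod_of_dvd _ (dvd_refl p)]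
    conv_lhs => rw [Nat.add_mod]
    conv_rhs => rw [Nat.add_comm, Nat.add_mod]
    rw [Nat.mod_mod_of_dvd _ (dvd_refl p)]
  calc Th p n A ⟨v', g.s + ((E2 + e3 : ℕ) : ZMod p)⟩
      = ((List.finRange (2 * n)).map (fun j => Xg p n A j ^ (v' j).val)).prod
          * Zg p n A ^ ((g.s + ((E2 + e3 : ℕ) : ZMod p)).val) := rfl
    _ = ((T.map f).prod * (Xg p n A k ^ ((g.v k + 1).val) * (D.map f).prod))
          * Zg p n A ^ ((E2 + e3) + g.s.val) := by
        rw [hzpow]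
        congr 1
        conv_lhs => rw [finRange_split k]
        rw [List.map_append, List.prod_append, List.map_cons, List.prod_cons,
          hmapT, hmapD, hvk]
    _ = (Zg p n A ^ (E2 + e3) * ((T.map f).prod
          * (Xg p n A k ^ ((g.v k + 1).val) * (D.map f).prod))) * Zg p n A ^ g.s.val := by
        rw [pow_add, ← mul_assoc,
          zshift hz (E2 + e3) ((T.map f).prod
            * (Xg p n A k ^ ((g.v k + 1).val) * (D.map f).prod))]
    _ = (((T.map f).prod * (f k * (D.map f).prod)) * Xg p n A k) * Zg p n A ^ g.s.val := by
        rw [hasm]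
    _ = Th p n A g * Xg p n A k := by
        rw [Th, hP, mul_assoc ((T.map f).prod * (f k * (D.map f).prod)) (Xg p n A k)]
        rw [mul_assoc ((T.map f).prod * (f k * (D.map f).prod)) (Zg p n A ^ g.s.val)]
        rw [← zshift hz g.s.val (Xg p n A k)]

lemma mulZ (hp : p.Prime) (g : Mdl p n A) :
    ∃ g' : Mdl p n A, Th p n A g' = Th p n A g * Zg p n A := by
  haveI : NeZero p := ⟨hp.pos.ne'⟩
  haveI : Fact (1 < p) := ⟨hp.one_lt⟩
  refine ⟨⟨g.v, g.s + 1⟩, ?_⟩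
  calc Th p n A ⟨g.v, g.s + 1⟩
      = ((List.finRange (2 * n)).map (fun j => Xg p n A j ^ (g.v j).val)).prod
          * Zg p n A ^ ((g.s + 1).val) := rfl
    _ = ((List.finRange (2 * n)).map (fun j => Xg p n A j ^ (g.v j).val)).prod
          * Zg p n A ^ (g.s.val + 1) := by
        congr 1
        apply Zg_pow_mod
        rw [ZMod.val_add, ZMod.val_one, Nat.mod_mod_of_dvd _ (dvd_refl p)]
    _ = Th p n A g * Zg p n A := by
        rw [Th, pow_succ, mul_assoc]

lemma mulPow (y : PresentedGroup (GRels p n A))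
    (hstep : ∀ g, ∃ g', Th p n A g' = Th p n A g * y) :
    ∀ (t : ℕ) (g), ∃ g', Th p n A g' = Th p n A g * y ^ t := by
  intro t
  induction t with
  | zero => intro g; exact ⟨g, by rw [pow_zero, mul_one]⟩
  | succ t ih =>
    intro g
    obtain ⟨g1, h1⟩ := ih g
    obtain ⟨g2, h2⟩ := hstep g1
    exact ⟨g2, by rw [h2, h1, pow_succ, mul_assoc]⟩

lemma Th_zero : Th p n A ⟨0, 0⟩ = 1 := by
  rw [Th]
  dsimp only
  rw [ZMod.val_zero, pow_zero, mul_one]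
  apply List.prod_eq_one
  intro x hx
  rw [List.mem_map] at hx
  obtain ⟨j, hj, rfl⟩ := hx
  rw [Pi.zero_apply, ZMod.val_zero, pow_zero]

lemma surjTh (hp : p.Prime) : Function.Surjective (Th p n A) := by
  haveI : NeZero p := ⟨hp.pos.ne'⟩
  have hmain : ∀ h : PresentedGroup (GRels p n A),
      (∀ g, ∃ g', Th p n A g' = Th p n A g * h)
        ∧ (∀ g, ∃ g', Th p n A g' = Th p n A g * h⁻¹) := by
    let Qs : Subgroup (PresentedGroup (GRels p n A)) :=
    { carrier := {h | (∀ g, ∃ g', Th p n A g' = Th p n A g * h)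
        ∧ (∀ g, ∃ g', Th p n A g' = Th p n A g * h⁻¹)}
      one_mem' := ⟨fun g => ⟨g, by rw [mul_one]⟩, fun g => ⟨g, by rw [inv_one, mul_one]⟩⟩
      mul_mem' := by
        rintro a b ⟨ha1, ha2⟩ ⟨hb1, hb2⟩
        constructor
        · intro g
          obtain ⟨g1, h1⟩ := ha1 g
          obtain ⟨g2, h2⟩ := hb1 g1
          exact ⟨g2, by rw [h2, h1, mul_assoc]⟩
        · intro g
          obtain ⟨g1, h1⟩ := hb2 g
          obtain ⟨g2, h2⟩ := ha2 g1
          exact ⟨g2, by rw [h2, h1, _root_.mul_inv_rev, mul_assoc]⟩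
      inv_mem' := by
        rintro a ⟨ha1, ha2⟩
        exact ⟨ha2, by rw [inv_inv]; exact ha1⟩ }
    have hXmem : ∀ k, Xg p n A k ∈ Qs := by
      intro k
      have hXpp : Xg p n A k ^ (p * p) = 1 := by
        rw [pow_mul, hXp, ← pow_mul, mul_comm (cc n k) p, pow_mul, hZp, one_pow]
      have hXinv : (Xg p n A k)⁻¹ = Xg p n A k ^ (p * p - 1) := by
        refine (eq_inv_of_mul_eq_one_left ?_).symm
        rw [← pow_succ, Nat.sub_add_cancel (Nat.one_le_iff_ne_zero.mpr
          (Nat.mul_ne_zero hp.pos.ne' hp.pos.ne')), hXpp]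
      constructor
      · exact fun g => mulX p n A hp g k
      · intro g
        rw [hXinv]
        exact mulPow p n A _ (fun g' => mulX p n A hp g' k) (p * p - 1) g
    have hZmem : Zg p n A ∈ Qs := by
      have hZinv : (Zg p n A)⁻¹ = Zg p n A ^ (p - 1) := by
        refine (eq_inv_of_mul_eq_one_left ?_).symm
        rw [← pow_succ, (show p - 1 + 1 = p by have := hp.one_lt; omega), hZp]
      constructor
      · exact fun g => mulZ p n A hp g
      · intro g
        rw [hZinv]
        exact mulPow p n A _ (fun g' => mulZ p n A hp g') (p - 1) g
    intro h
    have htop : h ∈ Qs := by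
      have hle : Subgroup.closure (Set.range (PresentedGroup.of :
          (Fin (2 * n) ⊕ Unit) → PresentedGroup (GRels p n A))) ≤ Qs := by
        rw [Subgroup.closure_le]
        rintro _ ⟨x, rfl⟩
        cases x with
        | inl j => exact hXmem j
        | inr u => exact hZmem
      exact hle ((PresentedGroup.closure_range_of _) ▸ Subgroup.mem_top h)
    exact htop
  intro h
  obtain ⟨g', hg'⟩ := (hmain h).1 ⟨0, 0⟩
  exact ⟨g', by rw [hg', Th_zero, one_mul]⟩

end NormalForm


section Phi

variable (p n : ℕ) (A : Matrix (Fin (2 * n)) (Fin (2 * n)) (ZMod p)) [NeZero p]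

/-- images of the generators in the model -/
def fmap : (Fin (2 * n) ⊕ Unit) → Mdl p n A :=
  Sum.elim (fun j => Mdl.xg j) (fun _ => Mdl.zg)

variable (hp : p.Prime) (hodd : Odd p) (hA : Aᵀ = -A)

include hp hodd hA in
lemma hrels : ∀ r ∈ GRels p n A, FreeGroup.lift (fmap p n A) r = 1 := by
  intro r hr
  rcases hr with ((h1 | h2) | h3) | h4
  · obtain ⟨j, rfl⟩ := h1
    dsimp only
    by_cases hj : (j : ℕ) < 2 * n - 2
    · rw [if_pos hj, map_pow, FreeGroup.lift_apply_of]
      show (Mdl.xg j : Mdl p n A) ^ p = 1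
      rw [Mdl.xg_p_eq hp hodd hA, show cc n j = 0 from if_pos hj, Nat.cast_zero, Mdl.one_def]
    · rw [if_neg hj, _root_.map_mul, map_pow, map_inv, FreeGroup.lift_apply_of, FreeGroup.lift_apply_of]
      show (Mdl.xg j : Mdl p n A) ^ p * (Mdl.zg)⁻¹ = 1
      rw [Mdl.xg_p_eq hp hodd hA, show cc n j = 1 from if_neg hj, Nat.cast_one, mul_inv_eq_one]
      rfl
  · rw [Set.mem_singleton_iff] at h2
    subst h2
    rw [map_pow, FreeGroup.lift_apply_of]
    exact Mdl.zg_pow_p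
  · obtain ⟨j, rfl⟩ := h3
    dsimp only
    rw [map_commutatorElement, FreeGroup.lift_apply_of, FreeGroup.lift_apply_of]
    show ⁅(Mdl.xg j : Mdl p n A), Mdl.zg⁆ = 1
    rw [Mdl.comm_eq hp hodd hA]
    show (⟨0, (Mdl.xg j : Mdl p n A).v ⬝ᵥ A *ᵥ (0 : Fin (2 * n) → ZMod p)⟩ : Mdl p n A) = 1
    rw [mulVec_zero, dotProduct_zero, Mdl.one_def]
  · obtain ⟨⟨j, k⟩, rfl⟩ := h4
    dsimp only
    rw [_root_.map_mul, map_commutatorElement, map_zpow, FreeGroup.lift_apply_of, FreeGroup.lift_apply_of,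
      FreeGroup.lift_apply_of, _root_.zpow_neg, mul_inv_eq_one, zpow_natCast]
    show ⁅(Mdl.xg j : Mdl p n A), Mdl.xg k⁆ = Mdl.zg ^ (A j k).val
    rw [Mdl.comm_eq hp hodd hA, Mdl.zg_pow]
    show (⟨0, Pi.single j 1 ⬝ᵥ A *ᵥ Pi.single k 1⟩ : Mdl p n A)
      = ⟨0, (((A j k).val : ℕ) : ZMod p)⟩
    rw [mulVec_single, single_dotProduct, one_mul]
    show (⟨0, A j k * 1⟩ : Mdl p n A) = _
    rw [mul_one, ZMod.natCast_val, ZMod.cast_id]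

/-- the homomorphism to the model -/
noncomputable def phi : PresentedGroup (GRels p n A) →* Mdl p n A :=
  PresentedGroup.toGroup (hrels p n A hp hodd hA)

lemma phi_X (j : Fin (2 * n)) : phi p n A hp hodd hA (Xg p n A j) = Mdl.xg j :=
  PresentedGroup.toGroup.of _

lemma phi_Z : phi p n A hp hodd hA (Zg p n A) = Mdl.zg :=
  PresentedGroup.toGroup.of _

lemma phi_surj : Function.Surjective (phi p n A hp hodd hA) := by
  intro m
  suffices h : ∀ (l : List (Fin (2 * n))) (v : Fin (2 * n) → ZMod p),
      (∀ j, j ∉ l → v j = 0) → ∀ s, (⟨v, s⟩ : Mdl p n A) ∈ (phi p n A hp hodd hA).range by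
    obtain ⟨g, hg⟩ := h (List.finRange (2 * n)) m.v
      (fun j hj => absurd (List.mem_finRange j) hj) m.s
    exact ⟨g, hg⟩
  intro l
  induction l with
  | nil =>
    intro v hv s
    have hv0 : v = 0 := funext fun j => hv j List.not_mem_nil
    subst hv0
    refine ⟨Zg p n A ^ s.val, ?_⟩
    rw [map_pow, phi_Z, Mdl.zg_pow, ZMod.natCast_val, ZMod.cast_id]
  | cons j l ih =>
    intro v hv s
    set v' : Fin (2 * n) → ZMod p := Function.update v j 0 with hv'def
    have hv' : ∀ i, i ∉ l → v' i = 0 := by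
      intro i hi
      by_cases hij : i = j
      · subst hij
        rw [hv'def, Function.update_self]
      · rw [hv'def, Function.update_of_ne hij]
        refine hv i ?_
        rw [List.mem_cons]
        push_neg
        exact ⟨hij, hi⟩
    have hsplit : (⟨v, s⟩ : Mdl p n A) = (⟨Pi.single j (v j), 0⟩ : Mdl p n A)
        * ⟨v', s - Bf A (Pi.single j (v j)) v' - kp p n (Pi.single j (v j)) v'⟩ := by
      rw [Mdl.mul_def]
      refine Mdl.ext ?_ ?_ <;> dsimp only
      · funext i
        by_cases hij : i = j
        · subst hij
          rw [Pi.add_apply, Pi.single_eq_same, hv'def, Function.update_self, add_zero]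
        · rw [Pi.add_apply, Pi.single_eq_of_ne hij, hv'def, Function.update_of_ne hij, zero_add]
      · ring
    rw [hsplit]
    refine mul_mem ?_ (ih v' hv' _)
    have hx : (⟨Pi.single j (v j), 0⟩ : Mdl p n A) = Mdl.xg j ^ (v j).val := by
      rw [Mdl.xg_pow hp hodd hA j (v j).val (le_of_lt (ZMod.val_lt _)),
        if_neg (Nat.ne_of_lt (ZMod.val_lt _)), ZMod.natCast_val, ZMod.cast_id]
    exact ⟨Xg p n A j ^ (v j).val, by rw [map_pow, phi_X]; exact hx.symm⟩

end Phi

end Stmt4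

open Stmt4 in
/-- Lemma `lem:identify-heisenberg`, second part: if `A` is an antisymmetric
`2n × 2n` matrix over `ℤ_p` with `det A ≠ 0`, then `G(A)` is an extra-special `p`-group of
order `p^{2n+1}` and exponent `p²`. -/
theorem stmt_4 (p n : ℕ) (hp : p.Prime) (hodd : Odd p) (hn : 1 ≤ n)
    (A : Matrix (Fin (2 * n)) (Fin (2 * n)) (ZMod p))
    (hA : Aᵀ = -A) (hdet : A.det ≠ 0) :
    Nat.card (PresentedGroup (GRels p n A)) = p ^ (2 * n + 1) ∧
    IsExtraSpecial p (PresentedGroup (GRels p n A)) ∧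
    Monoid.exponent (PresentedGroup (GRels p n A)) = p ^ 2 := by
  haveI : Fact p.Prime := ⟨hp⟩
  haveI : NeZero p := ⟨hp.pos.ne'⟩
  set φ := phi p n A hp hodd hA with hφ
  have hsurjφ : Function.Surjective φ := phi_surj p n A hp hodd hA
  have hsurjTh : Function.Surjective (Th p n A) := surjTh p n A hp
  haveI finPG : Finite (PresentedGroup (GRels p n A)) := Finite.of_surjective _ hsurjTh
  have hcardeq : Nat.card (PresentedGroup (GRels p n A)) = Nat.card (Mdl p n A) :=
    le_antisymm (Nat.card_le_card_of_surjective _ hsurjTh)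
      (Nat.card_le_card_of_surjective φ hsurjφ)
  have hcard : Nat.card (PresentedGroup (GRels p n A)) = p ^ (2 * n + 1) := by
    rw [hcardeq, Mdl.card_eq]
  have hbij : Function.Bijective φ :=
    (Nat.bijective_iff_surjective_and_card φ).mpr ⟨hsurjφ, hcardeq⟩
  have hinj := hbij.injective
  -- center characterization
  have hcent : ∀ g, g ∈ Subgroup.center (PresentedGroup (GRels p n A)) ↔ (φ g).v = 0 := by
    intro g
    constructor
    · intro hg
      rw [← Mdl.mem_center_iff hp hodd hA hdet]
      rw [Subgroup.mem_center_iff]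
      intro m
      obtain ⟨h', rfl⟩ := hsurjφ m
      rw [← _root_.map_mul, ← _root_.map_mul, Subgroup.mem_center_iff.mp hg h']
    · intro hv
      have hZc : φ g ∈ Subgroup.center (Mdl p n A) :=
        (Mdl.mem_center_iff hp hodd hA hdet _).mpr hv
      rw [Subgroup.mem_center_iff]
      intro h'
      apply hinj
      rw [_root_.map_mul, _root_.map_mul, Subgroup.mem_center_iff.mp hZc (φ h')]
  -- card of center
  have ecent : Nat.card (Subgroup.center (PresentedGroup (GRels p n A))) = p := by
    have e1 : {g : PresentedGroup (GRels p n A) // g ∈ Subgroup.center _}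
        ≃ {m : Mdl p n A // m.v = 0} :=
      (Equiv.ofBijective φ hbij).subtypeEquiv (fun g => hcent g)
    have e2 : {m : Mdl p n A // m.v = 0} ≃ ZMod p :=
      { toFun := fun m => m.1.s
        invFun := fun t => ⟨⟨0, t⟩, rfl⟩
        left_inv := fun m => Subtype.ext (Mdl.ext m.2.symm rfl)
        right_inv := fun t => rfl }
    rw [Nat.card_congr (e1.trans e2), Nat.card_zmod]
  have hqcard : Nat.card ((PresentedGroup (GRels p n A))
      ⧸ Subgroup.center (PresentedGroup (GRels p n A))) = p ^ (2 * n) := by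
    have h1 := Subgroup.card_eq_card_quotient_mul_card_subgroup
      (Subgroup.center (PresentedGroup (GRels p n A)))
    rw [hcard, ecent, pow_succ] at h1
    exact Nat.eq_of_mul_eq_mul_right hp.pos h1.symm
  refine ⟨hcard, ⟨?_, ?_, ecent, ?_, ?_, ?_⟩, ?_⟩
  · exact IsPGroup.of_card hcard
  · exact isCyclic_of_prime_card ecent
  · rw [← Finite.one_lt_card_iff_nontrivial, hqcard]
    exact Nat.one_lt_pow (by omega) hp.one_lt
  · intro x y
    refine QuotientGroup.induction_on x ?_
    intro a
    refine QuotientGroup.induction_on y ?_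
    intro b
    show QuotientGroup.mk a * QuotientGroup.mk b = QuotientGroup.mk b * QuotientGroup.mk a
    rw [← QuotientGroup.mk_mul, ← QuotientGroup.mk_mul, QuotientGroup.eq, hcent]
    simp only [_root_.map_mul, _root_.map_inv, Mdl.mul_v, Mdl.inv_v]
    abel
  · intro x
    refine QuotientGroup.induction_on x ?_
    intro a
    show (QuotientGroup.mk a : _ ⧸ Subgroup.center (PresentedGroup (GRels p n A))) ^ p = 1
    have hmk : (QuotientGroup.mk a : _ ⧸ Subgroup.center (PresentedGroup (GRels p n A))) ^ p
        = QuotientGroup.mk (a ^ p) := by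
      rw [show (QuotientGroup.mk a : _ ⧸ Subgroup.center (PresentedGroup (GRels p n A)))
          = QuotientGroup.mk' _ a from rfl, ← map_pow, QuotientGroup.mk'_apply]
    rw [hmk, QuotientGroup.eq_one_iff, hcent, map_pow]
    exact Mdl.pow_p_v (φ a)
  · -- exponent
    have hdvd1 : Monoid.exponent (PresentedGroup (GRels p n A)) ∣ p ^ 2 := by
      rw [Monoid.exponent_dvd_iff_forall_pow_eq_one]
      intro g
      apply hinj
      rw [map_pow, _root_.map_one, show p ^ 2 = p * p by ring]
      exact Mdl.exp_sq (φ g)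
    set j : Fin (2 * n) := ⟨2 * n - 1, by omega⟩ with hj
    have hccj : cc n j = 1 := by
      refine if_neg ?_
      show ¬(2 * n - 1 < 2 * n - 2)
      omega
    have h1 : (Mdl.xg j : Mdl p n A) ^ (p ^ 2) = 1 := by
      rw [show p ^ 2 = p * p by ring]
      exact Mdl.exp_sq _
    have h2 : (Mdl.xg j : Mdl p n A) ^ p ≠ 1 := by
      rw [Mdl.xg_p_eq hp hodd hA, hccj]
      intro hcontr
      have hs := congrArg Mdl.s hcontr
      rw [Mdl.one_def] at hs
      dsimp only at hs
      rw [Nat.cast_one] at hs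
      exact one_ne_zero hs
    have hordm : orderOf (Mdl.xg j : Mdl p n A) = p ^ 2 := by
      have hdvd : orderOf (Mdl.xg j : Mdl p n A) ∣ p ^ 2 := orderOf_dvd_of_pow_eq_one h1
      obtain ⟨i, hi2, hieq⟩ := (Nat.dvd_prime_pow hp).mp hdvd
      rcases Nat.lt_or_ge i 2 with hi | hi
      · exfalso
        apply h2
        have hdp : orderOf (Mdl.xg j : Mdl p n A) ∣ p := by
          rw [hieq]
          calc p ^ i ∣ p ^ 1 := pow_dvd_pow p (by omega)
          _ = p := pow_one p
        exact orderOf_dvd_iff_pow_eq_one.mp hdp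
      · have hi2' : i = 2 := by omega
        rw [hi2'] at hieq
        exact hieq
    have hordX : orderOf (Xg p n A j) = p ^ 2 := by
      rw [← hordm, ← phi_X p n A hp hodd hA j]
      exact (orderOf_injective φ hinj (Xg p n A j)).symm
    have hdvd2 : p ^ 2 ∣ Monoid.exponent (PresentedGroup (GRels p n A)) :=
      hordX ▸ Monoid.order_dvd_exponent (Xg p n A j)
    exact Nat.dvd_antisymm hdvd1 hdvd2
end

section
/- Let b ≥ 2 be an integer and let p be a prime number dividing b + 1. Then every extra-special p-group G of order p^{2b+1} admits a diagonal double Kodaira structure of strong type (b, p). -/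
open scoped commutatorElement

/-- The full set of relations of a diagonal double Kodaira structure, for elements
`r₁ j = r_{1,j+1}`, `t₁ j = t_{1,j+1}`, `r₂ j = r_{2,j+1}`, `t₂ j = t_{2,j+1}` (zero-based
index `j : Fin b`) and `z` of a group `G`. Here `⁅x, y⁆ = x * y * x⁻¹ * y⁻¹`. -/
def DDKRels {G : Type*} [Group G] (b : ℕ) (r₁ t₁ r₂ t₂ : Fin b → G) (z : G) : Prop :=
  -- surface relations
  ((List.ofFn fun j : Fin b =>
      ⁅(r₁ j.rev)⁻¹, (t₁ j.rev)⁻¹⁆ * (t₁ j.rev)⁻¹).prod *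
    (List.ofFn fun j : Fin b => t₁ j).prod = z) ∧
  ((List.ofFn fun j : Fin b => ⁅(r₂ j)⁻¹, t₂ j⁆ * t₂ j).prod *
    (List.ofFn fun j : Fin b => (t₂ j.rev)⁻¹).prod = z⁻¹) ∧
  -- conjugacy action of r₁ j
  (∀ j k, j ≤ k → ⁅r₁ j, r₂ k⁆ = 1) ∧
  (∀ j k, k < j → ⁅r₁ j, r₂ k⁆ = z⁻¹ * r₂ k * (r₂ j)⁻¹ * z * r₂ j * (r₂ k)⁻¹) ∧
  (∀ j k, j < k → ⁅r₁ j, t₂ k⁆ = 1) ∧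
  (∀ j, ⁅r₁ j, t₂ j⁆ = z⁻¹) ∧
  (∀ j k, k < j → ⁅r₁ j, t₂ k⁆ = ⁅z⁻¹, t₂ k⁆) ∧
  (∀ j, ⁅r₁ j, z⁆ = ⁅(r₂ j)⁻¹, z⁆) ∧
  -- conjugacy action of t₁ j
  (∀ j k, j < k → ⁅t₁ j, r₂ k⁆ = 1) ∧
  (∀ j, ⁅t₁ j, r₂ j⁆ = (t₂ j)⁻¹ * z * t₂ j) ∧
  (∀ j k, k < j → ⁅t₁ j, r₂ k⁆ = ⁅(t₂ j)⁻¹, z⁆) ∧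
  (∀ j k, j < k → ⁅t₁ j, t₂ k⁆ = 1) ∧
  (∀ j, ⁅t₁ j, t₂ j⁆ = ⁅(t₂ j)⁻¹, z⁆) ∧
  (∀ j k, k < j → ⁅t₁ j, t₂ k⁆ =
    (t₂ j)⁻¹ * z * t₂ j * z⁻¹ * t₂ k * z * (t₂ j)⁻¹ * z⁻¹ * t₂ j * (t₂ k)⁻¹) ∧
  (∀ j, ⁅t₁ j, z⁆ = ⁅(t₂ j)⁻¹, z⁆)

/-- A diagonal double Kodaira structure of type `(b, n)` on a group `G`: the elements
`r₁ j, t₁ j, r₂ j, t₂ j, z` generate `G`, the element `z` has order `n`, and the full set of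
relations `DDKRels` holds. -/
def IsDDKS {G : Type*} [Group G] (b n : ℕ) (r₁ t₁ r₂ t₂ : Fin b → G) (z : G) : Prop :=
  Subgroup.closure
      (Set.range r₁ ∪ Set.range t₁ ∪ Set.range r₂ ∪ Set.range t₂ ∪ {z}) = ⊤ ∧
  orderOf z = n ∧
  DDKRels b r₁ t₁ r₂ t₂ z

/-- The subgroup `K₁ = ⟨r_{11}, t_{11}, …, r_{1b}, t_{1b}, z⟩`. -/
def ddkK₁ {G : Type*} [Group G] {b : ℕ} (r₁ t₁ : Fin b → G) (z : G) : Subgroup G :=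
  Subgroup.closure (Set.range r₁ ∪ Set.range t₁ ∪ {z})

/-- The subgroup `K₂ = ⟨r_{21}, t_{21}, …, r_{2b}, t_{2b}, z⟩`. -/
def ddkK₂ {G : Type*} [Group G] {b : ℕ} (r₂ t₂ : Fin b → G) (z : G) : Subgroup G :=
  Subgroup.closure (Set.range r₂ ∪ Set.range t₂ ∪ {z})

open Subgroup

lemma myOfFn_rev {α : Type*} {n : ℕ} (f : Fin n → α) :
    List.ofFn (fun j => f j.rev) = (List.ofFn f).reverse := by
  apply List.ext_getElem
  · simp
  · intro i h1 h2
    simp only [List.getElem_ofFn, List.getElem_reverse, List.length_ofFn] at *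
    congr 1
    ext
    simp [Fin.rev]
    omega

lemma prod_rev_inv {G : Type*} [Group G] {n : ℕ} (t : Fin n → G) :
    (List.ofFn fun j => (t j.rev)⁻¹).prod = (List.ofFn t).prod⁻¹ := by
  have h1 : (List.ofFn fun j : Fin n => (t j.rev)⁻¹)
      = (List.ofFn fun i => (t i)⁻¹).reverse := myOfFn_rev (fun i => (t i)⁻¹)
  have h2 : (List.ofFn fun i : Fin n => (t i)⁻¹) = List.map (fun x => x⁻¹) (List.ofFn t) :=
    by rw [List.map_ofFn]; rfl
  rw [h1, h2, ← List.prod_inv_reverse]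

lemma prod_const_mul {G : Type*} [Group G] {n : ℕ} (c : G) (hc : ∀ w, c * w = w * c)
    (f : Fin n → G) :
    (List.ofFn fun j => c * f j).prod = c ^ n * (List.ofFn f).prod := by
  have hcw : ∀ w, Commute c w := fun w => hc w
  induction n with
  | zero => simp
  | succ m ih =>
    rw [List.ofFn_succ, List.ofFn_succ]
    simp only [List.prod_cons]
    rw [ih (fun i => f i.succ)]
    set R := (List.ofFn fun i => f i.succ).prod
    rw [show c * f 0 * (c ^ m * R) = c * (f 0 * c ^ m) * R by group,
      ← ((hcw (f 0)).pow_left m).eq,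
      show c * (c ^ m * f 0) * R = c ^ m * c * (f 0 * R) by group, ← pow_succ]

/-- Commutator identities with inverses, when the value is central. -/
lemma ddks_comm_inv {G : Type*} [Group G] {A B z : G} (hz : ∀ w, z * w = w * z)
    (h : ⁅A, B⁆ = z) :
    ⁅A, B⁻¹⁆ = z⁻¹ ∧ ⁅B⁻¹, A⁆ = z ∧ ⁅A⁻¹, B⁆ = z⁻¹ ∧ ⁅A⁻¹, B⁻¹⁆ = z := by
  have hcz : ∀ w, Commute z w := fun w => hz w
  have hAB : A * B = z * (B * A) := by rw [← h, commutatorElement_def]; group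
  have key : A * B * A⁻¹ = z * B := by rw [← h, commutatorElement_def]; group
  have hBA : B * A = z⁻¹ * (A * B) := by rw [hAB]; group
  have k2 : B⁻¹ * (A * B) = z * A := by
    rw [hAB, show B⁻¹ * (z * (B * A)) = B⁻¹ * z * (B * A) by group, ← hz B⁻¹]
    group
  refine ⟨?_, ?_, ?_, ?_⟩
  · have k1 : A * B⁻¹ * A⁻¹ = B⁻¹ * z⁻¹ := by
      rw [show A * B⁻¹ * A⁻¹ = (A * B * A⁻¹)⁻¹ by group, key]; group
    rw [commutatorElement_def, show A * B⁻¹ * A⁻¹ * B⁻¹⁻¹ = A * B⁻¹ * A⁻¹ * B by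
      rw [inv_inv], k1, show B⁻¹ * z⁻¹ * B = B⁻¹ * (z⁻¹ * B) by group, (hcz B).inv_left.eq]
    group
  · rw [commutatorElement_def, show B⁻¹ * A * B⁻¹⁻¹ * A⁻¹ = B⁻¹ * (A * B) * A⁻¹ by
      rw [inv_inv]; group, k2]
    group
  · have k3 : A⁻¹ * (B * A) = z⁻¹ * B := by
      rw [hBA, show A⁻¹ * (z⁻¹ * (A * B)) = A⁻¹ * z⁻¹ * (A * B) by group,
        ← (hcz A⁻¹).inv_left.eq]
      group
    rw [commutatorElement_def, show A⁻¹ * B * A⁻¹⁻¹ * B⁻¹ = A⁻¹ * (B * A) * B⁻¹ by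
      rw [inv_inv]; group, k3]
    group
  · rw [commutatorElement_def, show A⁻¹ * B⁻¹ * A⁻¹⁻¹ * B⁻¹⁻¹ = A⁻¹ * (B⁻¹ * (A * B)) by
      rw [inv_inv, inv_inv]; group, k2, show A⁻¹ * (z * A) = A⁻¹ * z * A by group,
      ← hz A⁻¹]
    group

universe u

lemma ddks_exists_symp (p : ℕ) (hp : p.Prime) :
    ∀ (n : ℕ) (G : Type u) [Group G] [Finite G] (z : G),
      (∀ w, z * w = w * z) → orderOf z = p →
      (∀ a b : G, ⁅a, b⁆ ∈ Subgroup.zpowers z) →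
      (∀ a : G, (∀ b : G, ⁅a, b⁆ = 1) → a ∈ Subgroup.zpowers z) →
      Nat.card G = p ^ (2 * n + 1) →
      ∃ x y : Fin n → G,
        (∀ i j, ⁅x i, x j⁆ = 1) ∧ (∀ i j, ⁅y i, y j⁆ = 1) ∧
        (∀ i j, i ≠ j → ⁅x i, y j⁆ = 1) ∧ (∀ i, ⁅x i, y i⁆ = z) ∧
        Subgroup.closure (Set.range x ∪ Set.range y ∪ {z}) = ⊤ := by
  intro n
  induction n with
  | zero =>
    intro G _ _ z hz hordz hcomm hnd hcard
    refine ⟨Fin.elim0, Fin.elim0, fun i => i.elim0, fun i => i.elim0,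
      fun i j _ => i.elim0, fun i => i.elim0, ?_⟩
    have h1 : Set.range (Fin.elim0 : Fin 0 → G) = ∅ := Set.range_eq_empty _
    rw [h1]
    simp only [Set.empty_union]
    rw [← Subgroup.zpowers_eq_closure]
    exact Subgroup.eq_top_of_card_eq _ (by
      rw [Nat.card_zpowers, hordz, hcard]; norm_num)
  | succ n ih =>
    intro G _ _ z hz hordz hcomm hnd hcard
    have hcz : ∀ w : G, Commute z w := fun w => hz w
    have hc' : Nat.card G = p ^ (2 * n + 3) := by rw [hcard]; ring_nf
    have hcent : ∀ g h w : G, ⁅g, h⁆ * w = w * ⁅g, h⁆ := by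
      intro g h w
      obtain ⟨k, hk⟩ := Subgroup.mem_zpowers_iff.mp (hcomm g h)
      rw [← hk]
      exact ((hcz w).zpow_left k).eq
    have hconj : ∀ g h : G, g * h * g⁻¹ = ⁅g, h⁆ * h := by
      intro g h; rw [commutatorElement_def]; group
    have hmul : ∀ w g h : G, ⁅g * h, w⁆ = ⁅g, w⁆ * ⁅h, w⁆ := by
      intro w g h
      calc ⁅g * h, w⁆ = g * (⁅h, w⁆ * w) * g⁻¹ * w⁻¹ := by
            rw [commutatorElement_def, commutatorElement_def]; group
        _ = g * ⁅h, w⁆ * (w * g⁻¹ * w⁻¹) := by group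
        _ = ⁅h, w⁆ * g * (w * g⁻¹ * w⁻¹) := by rw [← hcent h w g]
        _ = ⁅h, w⁆ * ⁅g, w⁆ := by rw [commutatorElement_def]; group
        _ = ⁅g, w⁆ * ⁅h, w⁆ := hcent h w _
    -- find a noncentral element a
    have hne : Subgroup.zpowers z ≠ ⊤ := by
      intro htop
      have h1 : Nat.card (Subgroup.zpowers z) = Nat.card G := by
        rw [htop]; exact Subgroup.card_top
      rw [Nat.card_zpowers, hordz, hc'] at h1
      have h2 : p < p ^ (2 * n + 3) := by
        calc p = p ^ 1 := (pow_one p).symm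
          _ < p ^ (2 * n + 3) := Nat.pow_lt_pow_right hp.one_lt (by omega)
      omega
    have hex : ∃ a : G, a ∉ Subgroup.zpowers z := by
      by_contra hcon
      push_neg at hcon
      exact hne ((Subgroup.eq_top_iff' (Subgroup.zpowers z)).mpr hcon)
    obtain ⟨a, ha⟩ := hex
    have hb0ex : ∃ b₀ : G, ⁅a, b₀⁆ ≠ 1 := by
      by_contra hcon
      push_neg at hcon
      exact ha (hnd a hcon)
    obtain ⟨b₀, hb₀⟩ := hb0ex
    have hcp : ⁅a, b₀⁆ ^ p = 1 := by
      obtain ⟨k, hk⟩ := Subgroup.mem_zpowers_iff.mp (hcomm a b₀)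
      rw [← hk, ← zpow_natCast, ← zpow_mul, mul_comm (k : ℤ), zpow_mul, zpow_natCast,
        ← hordz, pow_orderOf_eq_one, one_zpow]
    have hordc : orderOf ⁅a, b₀⁆ = p :=
      (hp.eq_one_or_self_of_dvd _ (orderOf_dvd_of_pow_eq_one hcp)).resolve_left
        (by simpa [orderOf_eq_one_iff] using hb₀)
    have hzc : Subgroup.zpowers ⁅a, b₀⁆ = Subgroup.zpowers z := by
      apply Subgroup.eq_of_le_of_card_ge (Subgroup.zpowers_le.mpr (hcomm a b₀))
      rw [Nat.card_zpowers, Nat.card_zpowers, hordc, hordz]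
    obtain ⟨m, hm⟩ : ∃ m : ℤ, ⁅a, b₀⁆ ^ m = z := by
      rw [← Subgroup.mem_zpowers_iff, hzc]
      exact Subgroup.mem_zpowers z
    have hab : ⁅a, b₀ ^ m⁆ = z := by
      have h2 : a * b₀ ^ m * a⁻¹ = z * b₀ ^ m := by
        rw [← conj_zpow, hconj a b₀, Commute.mul_zpow (hcent a b₀ b₀) m, hm]
      rw [commutatorElement_def, h2]
      group
    set b := b₀ ^ m with hbdef
    clear_value b
    have hselfa : ⁅a, a⁆ = 1 := commutatorElement_eq_one_iff_mul_comm.mpr rfl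
    have hselfb : ⁅b, b⁆ = 1 := commutatorElement_eq_one_iff_mul_comm.mpr rfl
    have hba : ⁅b, a⁆ = z⁻¹ := by rw [← commutatorElement_inv a b, hab]
    let ψ : G →* G × G := MonoidHom.mk' (fun g => (⁅g, a⁆, ⁅g, b⁆))
      (fun g h => Prod.ext (hmul a g h) (hmul b g h))
    have hψapp : ∀ g : G, ψ g = (⁅g, a⁆, ⁅g, b⁆) := fun g => rfl
    have hψa : ψ a = (1, z) := by rw [hψapp, hselfa, hab]
    have hψb : ψ b = (z⁻¹, 1) := by rw [hψapp, hselfb, hba]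
    have hker_iff : ∀ g : G, g ∈ ψ.ker ↔ (⁅g, a⁆ = 1 ∧ ⁅g, b⁆ = 1) := by
      intro g
      rw [MonoidHom.mem_ker, hψapp, Prod.mk_eq_one]
    have hdecomp : ∀ w : G, ∃ g : G, g ∈ ψ.ker ∧ ∃ s t : ℤ, w = g * a ^ t * b ^ (-s) := by
      intro w
      obtain ⟨s, hs⟩ := Subgroup.mem_zpowers_iff.mp (hcomm w a)
      obtain ⟨t, ht⟩ := Subgroup.mem_zpowers_iff.mp (hcomm w b)
      refine ⟨w * b ^ s * a ^ (-t), ?_, s, t, by group⟩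
      rw [MonoidHom.mem_ker, map_mul, map_mul, map_zpow, map_zpow, hψa, hψb, hψapp]
      rw [← hs, ← ht]
      ext
      · simp [inv_zpow, zpow_neg]
      · simp [inv_zpow, zpow_neg]
    have hrange_eq : ψ.range = (Subgroup.zpowers z).prod (Subgroup.zpowers z) := by
      apply le_antisymm
      · rintro _ ⟨g, rfl⟩
        rw [Subgroup.mem_prod]
        exact ⟨hcomm g a, hcomm g b⟩
      · rintro ⟨u, v⟩ huv
        rw [Subgroup.mem_prod] at huv
        obtain ⟨i, hi⟩ := Subgroup.mem_zpowers_iff.mp huv.1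
        obtain ⟨j, hj⟩ := Subgroup.mem_zpowers_iff.mp huv.2
        refine ⟨b ^ (-i) * a ^ j, ?_⟩
        rw [map_mul, map_zpow, map_zpow, hψa, hψb]
        ext
        · simp [inv_zpow, zpow_neg, hi]
        · simp [hj]
    have hcardker : Nat.card ψ.ker = p ^ (2 * n + 1) := by
      have h1 := Subgroup.card_eq_card_quotient_mul_card_subgroup ψ.ker
      have h2 : Nat.card (G ⧸ ψ.ker) = Nat.card ψ.range :=
        Nat.card_congr (QuotientGroup.quotientKerEquivRange ψ).toEquiv
      have h3 : Nat.card ψ.range = p * p := by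
        rw [hrange_eq]
        calc Nat.card ((Subgroup.zpowers z).prod (Subgroup.zpowers z))
            = Nat.card (↥(Subgroup.zpowers z) × ↥(Subgroup.zpowers z)) :=
              Nat.card_congr (Subgroup.prodEquiv _ _).toEquiv
          _ = p * p := by rw [Nat.card_prod, Nat.card_zpowers, hordz]
      rw [h2, h3, hc'] at h1
      have hpos : 0 < p * p := Nat.mul_pos hp.pos hp.pos
      apply Nat.eq_of_mul_eq_mul_left hpos
      rw [← h1]
      ring
    have hzker : z ∈ ψ.ker := (hker_iff z).mpr
      ⟨commutatorElement_eq_one_iff_mul_comm.mpr (hz a),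
       commutatorElement_eq_one_iff_mul_comm.mpr (hz b)⟩
    have hz' : ∀ w : ψ.ker, (⟨z, hzker⟩ : ψ.ker) * w = w * ⟨z, hzker⟩ :=
      fun w => Subtype.ext (hz w)
    have hord' : orderOf (⟨z, hzker⟩ : ψ.ker) = p := by
      rw [← orderOf_injective ψ.ker.subtype Subtype.coe_injective ⟨z, hzker⟩]
      exact hordz
    have hcomm' : ∀ g h : ψ.ker, ⁅g, h⁆ ∈ Subgroup.zpowers (⟨z, hzker⟩ : ψ.ker) := by
      intro g h
      obtain ⟨k, hk⟩ := Subgroup.mem_zpowers_iff.mp (hcomm (g : G) (h : G))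
      refine Subgroup.mem_zpowers_iff.mpr ⟨k, Subtype.ext ?_⟩
      rw [SubgroupClass.coe_zpow]
      exact hk
    have hHa : ∀ g : ψ.ker, Commute (g : G) a :=
      fun g => commutatorElement_eq_one_iff_mul_comm.mp ((hker_iff g).mp g.2).1
    have hHb : ∀ g : ψ.ker, Commute (g : G) b :=
      fun g => commutatorElement_eq_one_iff_mul_comm.mp ((hker_iff g).mp g.2).2
    have hnd' : ∀ g : ψ.ker, (∀ h : ψ.ker, ⁅g, h⁆ = 1) →
        g ∈ Subgroup.zpowers (⟨z, hzker⟩ : ψ.ker) := by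
      intro g hgall
      have hgG : ∀ w : G, ⁅(g : G), w⁆ = 1 := by
        intro w
        obtain ⟨h0, hh0, s, t, hw⟩ := hdecomp w
        have hgh : Commute (g : G) h0 := by
          have h1 := hgall ⟨h0, hh0⟩
          have h2 : ((⁅g, (⟨h0, hh0⟩ : ψ.ker)⁆ : ψ.ker) : G) = 1 := by rw [h1]; rfl
          exact commutatorElement_eq_one_iff_mul_comm.mp h2
        rw [hw]
        exact commutatorElement_eq_one_iff_mul_comm.mpr
          ((hgh.mul_right ((hHa g).zpow_right t)).mul_right ((hHb g).zpow_right (-s))).eq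
      obtain ⟨k, hk⟩ := Subgroup.mem_zpowers_iff.mp (hnd (g : G) hgG)
      refine Subgroup.mem_zpowers_iff.mpr ⟨k, Subtype.ext ?_⟩
      rw [SubgroupClass.coe_zpow]
      exact hk
    obtain ⟨x', y', hxx', hyy', hxy', hdiag', hclos'⟩ :=
      ih ψ.ker ⟨z, hzker⟩ hz' hord' hcomm' hnd' hcardker
    refine ⟨Fin.cons a (fun i => (x' i : G)), Fin.cons b (fun i => (y' i : G)),
      ?_, ?_, ?_, ?_, ?_⟩
    · intro i j
      refine Fin.cases ?_ (fun i' => ?_) i <;> refine Fin.cases ?_ (fun j' => ?_) j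
      · simpa [Fin.cons_zero] using hselfa
      · rw [Fin.cons_zero, Fin.cons_succ]
        exact commutatorElement_eq_one_iff_mul_comm.mpr ((hHa (x' j')).symm).eq
      · rw [Fin.cons_zero, Fin.cons_succ]
        exact commutatorElement_eq_one_iff_mul_comm.mpr (hHa (x' i')).eq
      · rw [Fin.cons_succ, Fin.cons_succ]
        have h1 : ((⁅x' i', x' j'⁆ : ψ.ker) : G) = ((1 : ψ.ker) : G) := by
          rw [hxx' i' j']
        exact h1
    · intro i j
      refine Fin.cases ?_ (fun i' => ?_) i <;> refine Fin.cases ?_ (fun j' => ?_) j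
      · simpa [Fin.cons_zero] using hselfb
      · rw [Fin.cons_zero, Fin.cons_succ]
        exact commutatorElement_eq_one_iff_mul_comm.mpr ((hHb (y' j')).symm).eq
      · rw [Fin.cons_zero, Fin.cons_succ]
        exact commutatorElement_eq_one_iff_mul_comm.mpr (hHb (y' i')).eq
      · rw [Fin.cons_succ, Fin.cons_succ]
        have h1 : ((⁅y' i', y' j'⁆ : ψ.ker) : G) = ((1 : ψ.ker) : G) := by
          rw [hyy' i' j']
        exact h1
    · intro i j
      refine Fin.cases ?_ (fun i' => ?_) i <;> refine Fin.cases ?_ (fun j' => ?_) j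
      · intro hne0; exact absurd rfl hne0
      · intro _
        rw [Fin.cons_zero, Fin.cons_succ]
        exact commutatorElement_eq_one_iff_mul_comm.mpr ((hHa (y' j')).symm).eq
      · intro _
        rw [Fin.cons_succ, Fin.cons_zero]
        exact commutatorElement_eq_one_iff_mul_comm.mpr (hHb (x' i')).eq
      · intro hne0
        rw [Fin.cons_succ, Fin.cons_succ]
        have hij : i' ≠ j' := fun e => hne0 (by rw [e])
        have h1 : ((⁅x' i', y' j'⁆ : ψ.ker) : G) = ((1 : ψ.ker) : G) := by
          rw [hxy' i' j' hij]
        exact h1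
    · intro i
      refine Fin.cases ?_ (fun i' => ?_) i
      · rw [Fin.cons_zero, Fin.cons_zero]; exact hab
      · rw [Fin.cons_succ, Fin.cons_succ]
        have h1 : ((⁅x' i', y' i'⁆ : ψ.ker) : G) = ((⟨z, hzker⟩ : ψ.ker) : G) := by
          rw [hdiag' i']
        exact h1
    · rw [eq_top_iff]
      rintro w -
      have haC : a ∈ Subgroup.closure (Set.range (Fin.cons a fun i => ((x' i : G)))
          ∪ Set.range (Fin.cons b fun i => ((y' i : G))) ∪ {z}) :=
        Subgroup.subset_closure (Or.inl (Or.inl ⟨0, Fin.cons_zero _ _⟩))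
      have hbC : b ∈ Subgroup.closure (Set.range (Fin.cons a fun i => ((x' i : G)))
          ∪ Set.range (Fin.cons b fun i => ((y' i : G))) ∪ {z}) :=
        Subgroup.subset_closure (Or.inl (Or.inr ⟨0, Fin.cons_zero _ _⟩))
      have hHle : ∀ g : G, g ∈ ψ.ker →
          g ∈ Subgroup.closure (Set.range (Fin.cons a fun i => ((x' i : G)))
            ∪ Set.range (Fin.cons b fun i => ((y' i : G))) ∪ {z}) := by
        intro g hg
        have h1 : (⟨g, hg⟩ : ψ.ker) ∈ Subgroup.closure
            (Set.range x' ∪ Set.range y' ∪ {(⟨z, hzker⟩ : ψ.ker)}) := by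
          rw [hclos']
          exact Subgroup.mem_top _
        have h2 := Subgroup.mem_map_of_mem ψ.ker.subtype h1
        rw [MonoidHom.map_closure] at h2
        refine Subgroup.closure_mono ?_ h2
        rintro u ⟨v, hv, rfl⟩
        rcases hv with (hv | hv) | hv
        · obtain ⟨i, rfl⟩ := hv
          exact Or.inl (Or.inl ⟨i.succ, by rw [Fin.cons_succ]; rfl⟩)
        · obtain ⟨i, rfl⟩ := hv
          exact Or.inl (Or.inr ⟨i.succ, by rw [Fin.cons_succ]; rfl⟩)
        · rw [hv]
          exact Or.inr rfl
      obtain ⟨g, hg, s, t, rfl⟩ := hdecomp w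
      exact mul_mem (mul_mem (hHle g hg) (zpow_mem haC t)) (zpow_mem hbC (-s))

/-- Theorem `thm:extra-special-sdks`: if `b ≥ 2` and `p` is a prime dividing
`b + 1`, then every extra-special `p`-group of order `p^{2b+1}` admits a diagonal double
Kodaira structure of strong type `(b, p)`, i.e. one with `K₁ = K₂ = G`. -/
theorem stmt_8 (b p : ℕ) (hb : 2 ≤ b) (hp : p.Prime) (hdvd : p ∣ b + 1)
    (G : Type*) [Group G] [Finite G] (hG : IsExtraSpecial p G)
    (hcard : Nat.card G = p ^ (2 * b + 1)) :
    ∃ (r₁ t₁ r₂ t₂ : Fin b → G) (z : G),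
      IsDDKS b p r₁ t₁ r₂ t₂ z ∧
      ddkK₁ r₁ t₁ z = ⊤ ∧ ddkK₂ r₂ t₂ z = ⊤ := by
  obtain ⟨hpG, hcyc, hcardZ, hnontriv, habel, hexp⟩ := hG
  obtain ⟨g, hg⟩ := hcyc.exists_generator
  have hzc : (g : G) ∈ Subgroup.center G := g.2
  have hz : ∀ w, (g : G) * w = w * (g : G) :=
    fun w => (Subgroup.mem_center_iff.mp hzc w).symm
  have hordz : orderOf (g : G) = p := by
    have h1 : orderOf g = p := by
      rw [orderOf_eq_card_of_forall_mem_zpowers hg, hcardZ]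
    rw [← h1]
    exact orderOf_injective (Subgroup.center G).subtype Subtype.coe_injective g
  have hzeq : Subgroup.zpowers (g : G) = Subgroup.center G := by
    apply le_antisymm (Subgroup.zpowers_le.mpr hzc)
    intro w hw
    obtain ⟨k, hk⟩ := Subgroup.mem_zpowers_iff.mp (hg ⟨w, hw⟩)
    refine Subgroup.mem_zpowers_iff.mpr ⟨k, ?_⟩
    rw [← SubgroupClass.coe_zpow, hk]
  have hcommz : ∀ u v : G, ⁅u, v⁆ ∈ Subgroup.zpowers (g : G) := by
    intro u v
    rw [hzeq, ← QuotientGroup.eq_one_iff]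
    have h1 : ((⁅u, v⁆ : G) : G ⧸ Subgroup.center G)
        = ⁅(u : G ⧸ Subgroup.center G), (v : G ⧸ Subgroup.center G)⁆ := rfl
    rw [h1]
    exact commutatorElement_eq_one_iff_mul_comm.mpr (habel _ _)
  have hndz : ∀ u : G, (∀ v : G, ⁅u, v⁆ = 1) → u ∈ Subgroup.zpowers (g : G) := by
    intro u hall
    rw [hzeq]
    exact Subgroup.mem_center_iff.mpr fun w =>
      (commutatorElement_eq_one_iff_mul_comm.mp (hall w)).symm
  obtain ⟨x, y, hxx, hyy, hxy, hdiag, hclos⟩ :=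
    ddks_exists_symp p hp b G (g : G) hz hordz hcommz hndz hcard
  set z : G := (g : G) with hzdef
  clear_value z
  -- basic facts about z
  have hcz : ∀ w : G, Commute z w := fun w => hz w
  have hzi : ∀ w : G, z⁻¹ * w = w * z⁻¹ := fun w => ((hcz w).inv_left).eq
  have hzb1 : z ^ (b + 1) = 1 := orderOf_dvd_iff_pow_eq_one.mp (hordz ▸ hdvd)
  have hzb : z ^ b = z⁻¹ := eq_inv_of_mul_eq_one_left (by rw [← pow_succ]; exact hzb1)
  have hzib : (z⁻¹) ^ b = z := by rw [inv_pow, hzb, inv_inv]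
  have key1 : ∀ u : G, u * z * u⁻¹ = z := fun u => by rw [← hz u]; group
  have key3 : ∀ u : G, z * u * z⁻¹ = u := fun u => by rw [hz u]; group
  have E := fun i => ddks_comm_inv hz (hdiag i)
  have hcomm_of : ∀ {u v : G}, ⁅u, v⁆ = 1 → Commute u v :=
    fun h => commutatorElement_eq_one_iff_mul_comm.mp h
  have hone_of : ∀ {u v : G}, Commute u v → ⁅u, v⁆ = 1 :=
    fun h => commutatorElement_eq_one_iff_mul_comm.mpr h.eq
  -- the K-subgroup claim
  have hKtop : Subgroup.closure (Set.range x ∪ Set.range (fun i => (y i)⁻¹) ∪ {z}) = ⊤ := by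
    rw [eq_top_iff, ← hclos]
    refine (Subgroup.closure_le _).mpr ?_
    rintro w hw
    rcases hw with (⟨i, rfl⟩ | ⟨i, rfl⟩) | hw
    · exact Subgroup.subset_closure (Or.inl (Or.inl ⟨i, rfl⟩))
    · have h1 : (y i)⁻¹ ∈ Subgroup.closure
          (Set.range x ∪ Set.range (fun i => (y i)⁻¹) ∪ {z}) :=
        Subgroup.subset_closure (Or.inl (Or.inr ⟨i, rfl⟩))
      simpa using inv_mem h1
    · rw [Set.mem_singleton_iff] at hw
      subst hw
      exact Subgroup.subset_closure (Or.inr rfl)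
  refine ⟨x, fun i => (y i)⁻¹, x, fun i => (y i)⁻¹, z, ⟨?_, hordz,
    ?_, ?_, ?_, ?_, ?_, ?_, ?_, ?_, ?_, ?_, ?_, ?_, ?_, ?_, ?_⟩, hKtop, hKtop⟩
  -- full generation
  · rw [eq_top_iff, ← hclos]
    refine (Subgroup.closure_le _).mpr ?_
    rintro w hw
    rcases hw with (⟨i, rfl⟩ | ⟨i, rfl⟩) | hw
    · exact Subgroup.subset_closure (Or.inl (Or.inl (Or.inl (Or.inl ⟨i, rfl⟩))))
    · have h1 : (y i)⁻¹ ∈ Subgroup.closure (Set.range x ∪ Set.range (fun i => (y i)⁻¹)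
          ∪ Set.range x ∪ Set.range (fun i => (y i)⁻¹) ∪ {z}) :=
        Subgroup.subset_closure (Or.inl (Or.inl (Or.inl (Or.inr ⟨i, rfl⟩))))
      simpa using inv_mem h1
    · rw [Set.mem_singleton_iff] at hw
      subst hw
      exact Subgroup.subset_closure (Or.inr rfl)
  -- surface relation 1
  · beta_reduce
    have hfun1 : (List.ofFn fun j : Fin b => ⁅(x j.rev)⁻¹, ((y j.rev)⁻¹)⁻¹⁆ * ((y j.rev)⁻¹)⁻¹)
        = List.ofFn (fun j : Fin b => z⁻¹ * ((y j.rev)⁻¹)⁻¹) := by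
      apply congrArg List.ofFn
      funext j
      congr 1
      rw [inv_inv]
      exact (E j.rev).2.2.1
    have hpc1 : (List.ofFn fun j : Fin b => z⁻¹ * ((y j.rev)⁻¹)⁻¹).prod
        = (z⁻¹) ^ b * (List.ofFn fun j : Fin b => ((y j.rev)⁻¹)⁻¹).prod :=
      prod_const_mul z⁻¹ hzi _
    have hrev1 : (List.ofFn fun j : Fin b => ((y j.rev)⁻¹)⁻¹).prod
        = (List.ofFn fun i : Fin b => (y i)⁻¹).prod⁻¹ :=
      prod_rev_inv (fun i => (y i)⁻¹)
    rw [hfun1, hpc1, hrev1, hzib]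
    group
  -- surface relation 2
  · beta_reduce
    have hfun2 : (List.ofFn fun j : Fin b => ⁅(x j)⁻¹, (y j)⁻¹⁆ * (y j)⁻¹)
        = List.ofFn (fun j : Fin b => z * (y j)⁻¹) := by
      apply congrArg List.ofFn
      funext j
      congr 1
      exact (E j).2.2.2
    have hpc2 : (List.ofFn fun j : Fin b => z * (y j)⁻¹).prod
        = z ^ b * (List.ofFn fun j : Fin b => (y j)⁻¹).prod :=
      prod_const_mul z hz _
    have hrev2 : (List.ofFn fun j : Fin b => ((y j.rev)⁻¹)⁻¹).prod
        = (List.ofFn fun i : Fin b => (y i)⁻¹).prod⁻¹ :=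
      prod_rev_inv (fun i => (y i)⁻¹)
    rw [hfun2, hpc2, hrev2, hzb]
    group
  -- c3
  · exact fun j k _ => hxx j k
  -- c4
  · intro j k _
    beta_reduce
    rw [hxx j k]
    symm
    calc z⁻¹ * x k * (x j)⁻¹ * z * x j * (x k)⁻¹
        = z⁻¹ * ((x k * (x j)⁻¹) * z) * (x j * (x k)⁻¹) := by group
      _ = z⁻¹ * (z * (x k * (x j)⁻¹)) * (x j * (x k)⁻¹) := by
          rw [← hz (x k * (x j)⁻¹)]
      _ = 1 := by group
  -- c5
  · intro j k h
    beta_reduce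
    exact hone_of (hcomm_of (hxy j k h.ne)).inv_right
  -- c6
  · intro j
    beta_reduce
    exact (E j).1
  -- c7
  · intro j k h
    beta_reduce
    have hL : ⁅x j, (y k)⁻¹⁆ = 1 := hone_of (hcomm_of (hxy j k h.ne')).inv_right
    have hR : ⁅z⁻¹, (y k)⁻¹⁆ = 1 := hone_of ((hcz (y k)⁻¹).inv_left)
    rw [hL, hR]
  -- c8
  · intro j
    beta_reduce
    have hL : ⁅x j, z⁆ = 1 := hone_of (hcz (x j)).symm
    have hR : ⁅(x j)⁻¹, z⁆ = 1 := hone_of (hcz (x j)).symm.inv_left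
    rw [hL, hR]
  -- c9
  · intro j k h
    beta_reduce
    exact hone_of (hcomm_of (hxy k j h.ne')).symm.inv_left
  -- c10
  · intro j
    beta_reduce
    rw [(E j).2.1, inv_inv]
    exact (key1 (y j)).symm
  -- c11
  · intro j k h
    beta_reduce
    have hL : ⁅(y j)⁻¹, x k⁆ = 1 := hone_of (hcomm_of (hxy k j h.ne)).symm.inv_left
    have hR : ⁅((y j)⁻¹)⁻¹, z⁆ = 1 := hone_of (hcz ((y j)⁻¹)⁻¹).symm
    rw [hL, hR]
  -- c12
  · intro j k h
    beta_reduce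
    exact hone_of (hcomm_of (hyy j k)).inv_left.inv_right
  -- c13
  · intro j
    beta_reduce
    have hL : ⁅(y j)⁻¹, (y j)⁻¹⁆ = 1 := hone_of (Commute.refl _)
    have hR : ⁅((y j)⁻¹)⁻¹, z⁆ = 1 := hone_of (hcz ((y j)⁻¹)⁻¹).symm
    rw [hL, hR]
  -- c14
  · intro j k hk
    beta_reduce
    have hL : ⁅(y j)⁻¹, (y k)⁻¹⁆ = 1 := hone_of (hcomm_of (hyy j k)).inv_left.inv_right
    rw [hL]
    simp only [inv_inv]
    symm
    calc y j * z * (y j)⁻¹ * z⁻¹ * (y k)⁻¹ * z * y j * z⁻¹ * (y j)⁻¹ * y k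
        = (y j * z * (y j)⁻¹) * z⁻¹ * ((y k)⁻¹ * ((z * y j * z⁻¹) * (y j)⁻¹) * y k) := by
          group
      _ = z * z⁻¹ * ((y k)⁻¹ * (y j * (y j)⁻¹) * y k) := by rw [key1, key3]
      _ = 1 := by group
  -- c15
  · intro j
    beta_reduce
    have hL : ⁅(y j)⁻¹, z⁆ = 1 := hone_of (hcz ((y j)⁻¹)).symm
    have hR : ⁅((y j)⁻¹)⁻¹, z⁆ = 1 := hone_of (hcz ((y j)⁻¹)⁻¹).symm
    rw [hL, hR]
end

section
/- Let G be a group whose commutator subgroup [G,G] is contained in its center Z(G), let b, n ≥ 2 be integers, and let r_{11}, t_{11}, …, r_{1b}, t_{1b}, r_{21}, t_{21}, …, r_{2b}, t_{2b}, z be elements of G with z of order n. Then these elements satisfy the full diagonal double Kodaira relations (listed in the context) if and only if they satisfy the following simplified relations: (centrality of z) [r_{1j}, z] = [t_{1j}, z] = [r_{2j}, z] = [t_{2j}, z] = 1 for all j; (surface relations) [r_{1b}⁻¹, t_{1b}⁻¹] [r_{1,b−1}⁻¹, t_{1,b−1}⁻¹] ⋯ [r_{11}⁻¹, t_{11}⁻¹]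 = z and [r_{21}⁻¹, t_{21}] [r_{22}⁻¹, t_{22}] ⋯ [r_{2b}⁻¹, t_{2b}] = z⁻¹; and, for all j, k ∈ {1,…,b}: [r_{1j}, r_{2k}] = 1, [t_{1j}, t_{2k}] = 1, [r_{1j}, t_{2k}] = z^{−δ_{jk}}, and [t_{1j}, r_{2k}] = z^{δ_{jk}}, where δ_{jk} is the Kronecker delta. -/
open scoped commutatorElement

section helpers
variable {G : Type*} [Group G]

lemma myConj (z g : G) (h : Commute z g) : z * g * z⁻¹ = g := by
  rw [h.eq, mul_inv_cancel_right]

lemma myConj' (z g : G) (h : Commute z g) : z⁻¹ * g * z = g := by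
  rw [h.inv_left.eq, inv_mul_cancel_right]

lemma myAux1 (z a b : G) (h : ∀ g, Commute z g) :
    z⁻¹ * a * b⁻¹ * z * b * a⁻¹ = 1 := by
  calc z⁻¹ * a * b⁻¹ * z * b * a⁻¹ = (z⁻¹ * (a * b⁻¹) * z) * (b * a⁻¹) := by group
  _ = (a * b⁻¹) * (b * a⁻¹) := by rw [myConj' z _ (h _)]
  _ = 1 := by group

lemma myAux2 (z t s : G) (h : ∀ g, Commute z g) :
    t⁻¹ * z * t * z⁻¹ * s * z * t⁻¹ * z⁻¹ * t * s⁻¹ = 1 := by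
  calc t⁻¹ * z * t * z⁻¹ * s * z * t⁻¹ * z⁻¹ * t * s⁻¹
      = t⁻¹ * (z * t * z⁻¹) * s * (z * t⁻¹ * z⁻¹) * t * s⁻¹ := by group
  _ = t⁻¹ * t * s * t⁻¹ * t * s⁻¹ := by rw [myConj z t (h t), myConj z t⁻¹ (h t⁻¹)]
  _ = 1 := by group

lemma myListSplit {ι : Type*} (l : List ι) (c u : ι → G) (h : ∀ i, ∀ g, Commute (c i) g) :
    (l.map fun i => c i * u i).prod = (l.map c).prod * (l.map u).prod := by
  induction l with
  | nil => simp
  | cons a l ih =>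
    simp only [List.map_cons, List.prod_cons, ih]
    have hc : Commute (u a) (l.map c).prod := by
      refine Commute.list_prod_right _ _ fun x hx => ?_
      obtain ⟨i, _, rfl⟩ := List.mem_map.mp hx
      exact (h i (u a)).symm
    rw [mul_assoc, mul_assoc, ← mul_assoc (u a), hc.eq, mul_assoc]

lemma myOfFnSplit {b : ℕ} (c u : Fin b → G) (h : ∀ i, ∀ g, Commute (c i) g) :
    (List.ofFn fun i => c i * u i).prod = (List.ofFn c).prod * (List.ofFn u).prod := by
  simp only [List.ofFn_eq_map]
  exact myListSplit _ c u h

omit [Group G] in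
lemma myOfFnRev {b : ℕ} (f : Fin b → G) :
    List.ofFn (fun i => f i.rev) = (List.ofFn f).reverse := by
  apply List.ext_getElem
  · simp
  · intro i h1 h2
    simp only [List.getElem_ofFn, List.getElem_reverse]
    congr 1
    simp at h1 h2 ⊢
    ext
    simp [Fin.rev]
    omega

lemma myRevInvProd {b : ℕ} (t : Fin b → G) :
    (List.ofFn fun j : Fin b => (t j.rev)⁻¹).prod = ((List.ofFn t).prod)⁻¹ := by
  rw [List.prod_inv_reverse, List.map_ofFn]
  congr 1
  exact myOfFnRev (fun i => (t i)⁻¹)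

end helpers

/-- The simplified relations of Remark `rmk:commutators-in-the-center`: centrality of `z`,
the simplified surface relations, and `[r₁ⱼ, r₂ₖ] = [t₁ⱼ, t₂ₖ] = 1`,
`[r₁ⱼ, t₂ₖ] = z^{-δⱼₖ}`, `[t₁ⱼ, r₂ₖ] = z^{δⱼₖ}`. -/
def DDKRelsSimple {G : Type*} [Group G] (b : ℕ) (r₁ t₁ r₂ t₂ : Fin b → G) (z : G) : Prop :=
  (∀ j, ⁅r₁ j, z⁆ = 1 ∧ ⁅t₁ j, z⁆ = 1 ∧ ⁅r₂ j, z⁆ = 1 ∧ ⁅t₂ j, z⁆ = 1) ∧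
  ((List.ofFn fun j : Fin b => ⁅(r₁ j.rev)⁻¹, (t₁ j.rev)⁻¹⁆).prod = z) ∧
  ((List.ofFn fun j : Fin b => ⁅(r₂ j)⁻¹, t₂ j⁆).prod = z⁻¹) ∧
  (∀ j k, ⁅r₁ j, r₂ k⁆ = 1) ∧
  (∀ j k, ⁅t₁ j, t₂ k⁆ = 1) ∧
  (∀ j k, ⁅r₁ j, t₂ k⁆ = if j = k then z⁻¹ else 1) ∧
  (∀ j k, ⁅t₁ j, r₂ k⁆ = if j = k then z else 1)

/-- Remark `rmk:commutators-in-the-center`: if `[G, G] ⊆ Z(G)`, then the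
full diagonal double Kodaira relations are equivalent to the simplified relations. -/
theorem stmt_10 (G : Type*) [Group G] (hG : commutator G ≤ Subgroup.center G)
    (b n : ℕ) (hb : 2 ≤ b) (hn : 2 ≤ n)
    (r₁ t₁ r₂ t₂ : Fin b → G) (z : G) (hz : orderOf z = n) :
    DDKRels b r₁ t₁ r₂ t₂ z ↔ DDKRelsSimple b r₁ t₁ r₂ t₂ z := by
  have hcomm : ∀ x y g : G, Commute ⁅x, y⁆ g := by
    intro x y g
    have hmem : ⁅x, y⁆ ∈ commutator G := by
      rw [commutator_def]
      exact Subgroup.commutator_mem_commutator (Subgroup.mem_top x) (Subgroup.mem_top y)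
    exact ((Subgroup.mem_center_iff.mp (hG hmem)) g).symm
  have j0 : Fin b := ⟨0, by omega⟩
  constructor
  · rintro ⟨hs1, hs2, hrr1, hrr2, hrt1, hrt2, hrt3, hrz, htr1, htr2, htr3, htt1, htt2,
      htt3, htz⟩
    have hzc : ∀ g, Commute z g := by
      intro g
      have h := hcomm (r₁ j0) (t₂ j0) g
      rw [hrt2 j0] at h
      simpa using h.inv_left
    refine ⟨fun j => ⟨?_, ?_, ?_, ?_⟩, ?_, ?_, ?_, ?_, ?_, ?_⟩
    · exact commutatorElement_eq_one_iff_commute.mpr (hzc _).symm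
    · exact commutatorElement_eq_one_iff_commute.mpr (hzc _).symm
    · exact commutatorElement_eq_one_iff_commute.mpr (hzc _).symm
    · exact commutatorElement_eq_one_iff_commute.mpr (hzc _).symm
    · -- surface relation 1
      rw [myOfFnSplit _ _ (fun i g => hcomm _ _ g), myRevInvProd t₁, mul_assoc,
        inv_mul_cancel, mul_one] at hs1
      exact hs1
    · -- surface relation 2
      rw [myOfFnSplit _ _ (fun i g => hcomm _ _ g), myRevInvProd t₂, mul_assoc,
        mul_inv_cancel, mul_one] at hs2
      exact hs2
    · intro j k
      rcases le_or_gt j k with h | h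
      · exact hrr1 j k h
      · rw [hrr2 j k h]
        exact myAux1 z (r₂ k) (r₂ j) hzc
    · intro j k
      rcases lt_trichotomy j k with h | h | h
      · exact htt1 j k h
      · subst h
        rw [htt2 j]
        exact commutatorElement_eq_one_iff_commute.mpr (hzc _).symm.inv_left
      · rw [htt3 j k h]
        exact myAux2 z (t₂ j) (t₂ k) hzc
    · intro j k
      rcases lt_trichotomy j k with h | h | h
      · rw [if_neg h.ne]
        exact hrt1 j k h
      · subst h
        rw [if_pos rfl]
        exact hrt2 j
      · rw [if_neg h.ne']
        rw [hrt3 j k h]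
        exact commutatorElement_eq_one_iff_commute.mpr (hzc _).inv_left
    · intro j k
      rcases lt_trichotomy j k with h | h | h
      · rw [if_neg h.ne]
        exact htr1 j k h
      · subst h
        rw [if_pos rfl, htr2 j]
        exact myConj' (t₂ j) z (hzc _).symm
      · rw [if_neg h.ne', htr3 j k h]
        exact commutatorElement_eq_one_iff_commute.mpr (hzc _).symm.inv_left
  · rintro ⟨hc, hs1, hs2, hrr, htt, hrt, htr⟩
    have hzc : ∀ g, Commute z g := by
      intro g
      have h := hcomm (r₁ j0) (t₂ j0) g
      rw [hrt j0 j0, if_pos rfl] at h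
      simpa using h.inv_left
    have hone : ∀ a : G, Commute a z → ⁅a, z⁆ = 1 :=
      fun a h => commutatorElement_eq_one_iff_commute.mpr h
    refine ⟨?_, ?_, ?_, ?_, ?_, ?_, ?_, ?_, ?_, ?_, ?_, ?_, ?_, ?_, ?_⟩
    · rw [myOfFnSplit _ _ (fun i g => hcomm _ _ g), myRevInvProd t₁, mul_assoc,
        inv_mul_cancel, mul_one]
      exact hs1
    · rw [myOfFnSplit _ _ (fun i g => hcomm _ _ g), myRevInvProd t₂, mul_assoc,
        mul_inv_cancel, mul_one]
      exact hs2
    · exact fun j k _ => hrr j k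
    · intro j k h
      rw [hrr j k]
      exact (myAux1 z (r₂ k) (r₂ j) hzc).symm
    · intro j k h
      rw [hrt j k, if_neg h.ne]
    · intro j
      rw [hrt j j, if_pos rfl]
    · intro j k h
      rw [hrt j k, if_neg h.ne']
      exact (commutatorElement_eq_one_iff_commute.mpr (hzc _).inv_left).symm
    · intro j
      rw [hone _ (hzc _).symm, hone _ (hzc _).symm.inv_left]
    · intro j k h
      rw [htr j k, if_neg h.ne]
    · intro j
      rw [htr j j, if_pos rfl]
      exact (myConj' (t₂ j) z (hzc _).symm).symm
    · intro j k h
      rw [htr j k, if_neg h.ne', hone _ (hzc _).symm.inv_left]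
    · intro j k h
      rw [htt j k]
    · intro j
      rw [htt j j, hone _ (hzc _).symm.inv_left]
    · intro j k h
      rw [htt j k]
      exact (myAux2 z (t₂ j) (t₂ k) hzc).symm
    · intro j
      rw [hone _ (hzc _).symm, hone _ (hzc _).symm.inv_left]
end

section
/- Let G be a finite group carrying a diagonal double Kodaira structure of type (b, n) with elements r_{11}, t_{11}, …, r_{1b}, t_{1b}, r_{21}, t_{21}, …, r_{2b}, t_{2b}, z as in the context. Then the subgroup K₂ = ⟨r_{21}, t_{21}, …, r_{2b}, t_{2b}, z⟩ is a normal subgroup of G. -/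
open scoped commutatorElement

section Aux

variable {G : Type*} [Group G]

private lemma conj_closure_mem {S : Set G} {g : G}
    (h : ∀ x ∈ S, g * x * g⁻¹ ∈ Subgroup.closure S) :
    ∀ x ∈ Subgroup.closure S, g * x * g⁻¹ ∈ Subgroup.closure S := by
  have hle : Subgroup.closure S ≤
      (Subgroup.closure S).comap (MulAut.conj g).toMonoidHom := by
    apply (Subgroup.closure_le _).2
    intro x hx
    simpa [Subgroup.mem_comap] using h x hx
  intro x hx
  simpa [Subgroup.mem_comap] using hle hx

private lemma mem_normalizer_of_conj [Finite G] {K : Subgroup G} {g : G}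
    (h : ∀ x ∈ K, g * x * g⁻¹ ∈ K) : g ∈ Subgroup.normalizer (K : Set G) := by
  have hpow : ∀ m : ℕ, ∀ x ∈ K, g ^ m * x * (g ^ m)⁻¹ ∈ K := by
    intro m
    induction m with
    | zero => simpa using fun x hx => hx
    | succ m ih =>
      intro x hx
      have := h _ (ih x hx)
      simpa [pow_succ', mul_assoc] using this
  have hg : 0 < orderOf g := (isOfFinOrder_of_finite g).orderOf_pos
  have hinv : g⁻¹ = g ^ (orderOf g - 1) := by
    apply inv_eq_of_mul_eq_one_left
    rw [← pow_succ, Nat.sub_add_cancel hg, pow_orderOf_eq_one]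
  rw [Subgroup.mem_normalizer_iff]
  intro x
  constructor
  · exact h x
  · intro hx
    have := hpow (orderOf g - 1) _ hx
    rw [← hinv] at this
    simpa [mul_assoc] using this

end Aux

/-- if a finite group `G` carries a diagonal double Kodaira structure of
type `(b, n)`, then the subgroup `K₂ = ⟨r_{21}, t_{21}, …, r_{2b}, t_{2b}, z⟩` is normal. -/

theorem stmt_11 (G : Type*) [Group G] [Finite G] (b n : ℕ) (hb : 2 ≤ b) (hn : 2 ≤ n)
    (r₁ t₁ r₂ t₂ : Fin b → G) (z : G)
    (h : IsDDKS b n r₁ t₁ r₂ t₂ z) :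
    (ddkK₂ r₂ t₂ z).Normal := by
  obtain ⟨hgen, -, -, -, h3, h4, h5, h6, h7, h8, h9, h10, h11, h12, h13, h14, h15⟩ := h
  set K : Subgroup G := ddkK₂ r₂ t₂ z with hK
  have hzK : z ∈ K := Subgroup.subset_closure (by simp)
  have hcK : ∀ a ∈ K, ∀ c ∈ K, ⁅a, c⁆ ∈ K := fun a ha c hc => by
    rw [commutatorElement_def]
    exact mul_mem (mul_mem (mul_mem ha hc) (inv_mem ha)) (inv_mem hc)
  have hrK : ∀ k, r₂ k ∈ K := fun k => Subgroup.subset_closure (by left; left; exact ⟨k, rfl⟩)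
  have htK : ∀ k, t₂ k ∈ K := fun k => Subgroup.subset_closure (by left; right; exact ⟨k, rfl⟩)
  -- conjugation of each generator of K by r₁ j or t₁ j lies in K
  have key : ∀ g : G, (∀ x ∈ (Set.range r₂ ∪ Set.range t₂ ∪ {z} : Set G), ⁅g, x⁆ ∈ K) →
      ∀ x ∈ K, g * x * g⁻¹ ∈ K := by
    intro g hg
    apply conj_closure_mem
    intro x hx
    have : g * x * g⁻¹ = ⁅g, x⁆ * x := by group
    rw [this]
    exact mul_mem (hg x hx) (Subgroup.subset_closure hx)
  have hcomm : ∀ j : Fin b, ∀ g ∈ ({r₁ j, t₁ j} : Set G),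
      ∀ x ∈ (Set.range r₂ ∪ Set.range t₂ ∪ {z} : Set G), ⁅g, x⁆ ∈ K := by
    rintro j g hg x ((⟨k, rfl⟩ | ⟨k, rfl⟩) | rfl)
    · rcases hg with rfl | rfl
      · rcases le_or_gt j k with hjk | hjk
        · rw [h3 j k hjk]; exact one_mem K
        · rw [h4 j k hjk]
          exact mul_mem (mul_mem (mul_mem (mul_mem (mul_mem (inv_mem hzK) (hrK k))
            (inv_mem (hrK j))) hzK) (hrK j)) (inv_mem (hrK k))
      · rcases lt_trichotomy j k with hjk | rfl | hjk
        · rw [h9 j k hjk]; exact one_mem K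
        · rw [h10 j]
          exact mul_mem (mul_mem (inv_mem (htK j)) hzK) (htK j)
        · rw [h11 j k hjk]
          exact hcK _ (inv_mem (htK j)) _ hzK
    · rcases hg with rfl | rfl
      · rcases lt_trichotomy j k with hjk | rfl | hjk
        · rw [h5 j k hjk]; exact one_mem K
        · rw [h6 j]; exact inv_mem hzK
        · rw [h7 j k hjk]
          exact hcK _ (inv_mem hzK) _ (htK k)
      · rcases lt_trichotomy j k with hjk | rfl | hjk
        · rw [h12 j k hjk]; exact one_mem K
        · rw [h13 j]; exact hcK _ (inv_mem (htK j)) _ hzK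
        · rw [h14 j k hjk]
          exact mul_mem (mul_mem (mul_mem (mul_mem (mul_mem (mul_mem (mul_mem (mul_mem
            (mul_mem (inv_mem (htK j)) hzK) (htK j)) (inv_mem hzK)) (htK k)) hzK)
            (inv_mem (htK j))) (inv_mem hzK)) (htK j)) (inv_mem (htK k))
    · rcases hg with rfl | rfl
      · rw [h8 j]; exact hcK _ (inv_mem (hrK j)) _ hzK
      · rw [h15 j]; exact hcK _ (inv_mem (htK j)) _ hzK
  rw [← Subgroup.normalizer_eq_top_iff, eq_top_iff, ← hgen]
  apply (Subgroup.closure_le _).2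
  rintro x ((((⟨j, rfl⟩ | ⟨j, rfl⟩) | ⟨j, rfl⟩) | ⟨j, rfl⟩) | rfl)
  · exact mem_normalizer_of_conj (key _ (hcomm j _ (by simp)))
  · exact mem_normalizer_of_conj (key _ (hcomm j _ (by simp)))
  · exact Subgroup.le_normalizer (hrK j)
  · exact Subgroup.le_normalizer (htK j)
  · exact Subgroup.le_normalizer hzK
end

section
/- The defining relations of a diagonal double Kodaira structure are invariant under the substitution z ↔ z⁻¹, t_{1j} ↔ t_{2,b+1−j}⁻¹, r_{1j} ↔ r_{2,b+1−j}. Precisely: let G be a group, b, n ≥ 2 integers, and suppose elements r_{11}, t_{11}, …, r_{1b}, t_{1b}, r_{21}, t_{21}, …, r_{2b}, t_{2b}, z of G satisfy the diagonal double Kodaira relations listed in the context, with z of order n. Define z' = z⁻¹, and for j = 1, …, b set r'_{1j} = r_{2,b+1−j}, t'_{1j} = t_{2,b+1−j}⁻¹, r'_{2j} = r_{1,b+1−j}, t'_{2j} = t_{1,b+1−j}⁻¹. Then z' has order n and the elements r'_{11}, t'_{11}, …, r'_{1b}, t'_{1b}, r'_{21}, t'_{21}, …, r'_{2b}, t'_{2b},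 z' also satisfy the diagonal double Kodaira relations. -/
open scoped commutatorElement

private lemma conj_of_comm {G : Type*} [Group G] {x y w : G} (h : ⁅x, y⁆ = w) :
    x * y * x⁻¹ = w * y := by
  rw [commutatorElement_def] at h
  calc x * y * x⁻¹ = x * y * x⁻¹ * y⁻¹ * y := by group
  _ = w * y := by rw [h]

private lemma comm_of_conj {G : Type*} [Group G] {x y w : G} (h : x * y * x⁻¹ = w * y) :
    ⁅x, y⁆ = w := by
  rw [commutatorElement_def]
  calc x * y * x⁻¹ * y⁻¹ = (x * y * x⁻¹) * y⁻¹ := by group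
  _ = (w * y) * y⁻¹ := by rw [h]
  _ = w := by group

private lemma comm_eq_comm_of_conj {G : Type*} [Group G] {x x' y : G}
    (h : x * y * x⁻¹ = x' * y * x'⁻¹) : ⁅x, y⁆ = ⁅x', y⁆ := by
  rw [commutatorElement_def, commutatorElement_def]
  calc x * y * x⁻¹ * y⁻¹ = (x * y * x⁻¹) * y⁻¹ := by group
  _ = (x' * y * x'⁻¹) * y⁻¹ := by rw [h]
  _ = x' * y * x'⁻¹ * y⁻¹ := by group

private lemma conj_inv_arg {G : Type*} [Group G] {p x w : G} (h : p * x * p⁻¹ = w) :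
    p * x⁻¹ * p⁻¹ = w⁻¹ := by
  calc p * x⁻¹ * p⁻¹ = (p * x * p⁻¹)⁻¹ := by group
  _ = w⁻¹ := by rw [h]

private lemma inv_conj_of_conj {G : Type*} [Group G] {p q x : G}
    (h : p * x * p⁻¹ = q⁻¹ * x * q) (hc : p * q = q * p) :
    p⁻¹ * x * p = q * x * q⁻¹ := by
  have h2 : (p * q) * x = x * (p * q) := by
    rw [hc]
    calc (q * p) * x = q * (p * x * p⁻¹) * p := by group
    _ = q * (q⁻¹ * x * q) * p := by rw [h]
    _ = x * (q * p) := by group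
  calc p⁻¹ * x * p = p⁻¹ * (x * (p * q)) * q⁻¹ := by group
  _ = p⁻¹ * ((p * q) * x) * q⁻¹ := by rw [h2]
  _ = q * x * q⁻¹ := by group

/-- equation `eq:substitutions-S`: the diagonal double Kodaira relations
are invariant under the substitution `z ↔ z⁻¹`, `t_{1j} ↔ t_{2,b+1-j}⁻¹`,
`r_{1j} ↔ r_{2,b+1-j}` (in our zero-based indexing, `b+1-j` corresponds to `Fin.rev`). -/
theorem stmt_12 (G : Type*) [Group G] (b n : ℕ) (hb : 2 ≤ b) (hn : 2 ≤ n)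
    (r₁ t₁ r₂ t₂ : Fin b → G) (z : G)
    (hz : orderOf z = n) (h : DDKRels b r₁ t₁ r₂ t₂ z) :
    orderOf z⁻¹ = n ∧
    DDKRels b (fun j => r₂ j.rev) (fun j => (t₂ j.rev)⁻¹)
      (fun j => r₁ j.rev) (fun j => (t₁ j.rev)⁻¹) z⁻¹ := by
  unfold DDKRels at h
  obtain ⟨hs1, hs2, h3, h4, h5, h6, h7, h8, h9, h10, h11, h12, h13, h14, h15⟩ := h
  -- derived conjugation facts
  have C8 : ∀ a, r₁ a * z * (r₁ a)⁻¹ = (r₂ a)⁻¹ * z * r₂ a := fun a =>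
    (conj_of_comm (h8 a)).trans (by rw [commutatorElement_def]; group)
  have C8' : ∀ a, r₁ a * z⁻¹ * (r₁ a)⁻¹ = (r₂ a)⁻¹ * z⁻¹ * r₂ a := fun a =>
    (conj_inv_arg (C8 a)).trans (by group)
  have commR : ∀ a, r₁ a * r₂ a = r₂ a * r₁ a := fun a =>
    (commutatorElement_eq_one_iff_commute.mp (h3 a a le_rfl)).eq
  have C15 : ∀ a, t₁ a * z * (t₁ a)⁻¹ = (t₂ a)⁻¹ * z * t₂ a := fun a =>
    (conj_of_comm (h15 a)).trans (by rw [commutatorElement_def]; group)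
  have C15' : ∀ a, t₁ a * z⁻¹ * (t₁ a)⁻¹ = (t₂ a)⁻¹ * z⁻¹ * t₂ a := fun a =>
    (conj_inv_arg (C15 a)).trans (by group)
  constructor
  · rwa [orderOf_inv]
  unfold DDKRels
  refine ⟨?_, ?_, ?_, ?_, ?_, ?_, ?_, ?_, ?_, ?_, ?_, ?_, ?_, ?_, ?_⟩
  -- new surface relation 1 (is the old surface relation 2)
  · simp only [Fin.rev_rev, inv_inv]
    exact hs2
  -- new surface relation 2 (is the old surface relation 1)
  · simp only [Fin.rev_rev, inv_inv]
    exact hs1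
  -- G3
  · intro j k hjk
    exact commutatorElement_eq_one_iff_commute.mpr
      ((commutatorElement_eq_one_iff_commute.mp
        (h3 k.rev j.rev (Fin.rev_le_rev.mpr hjk))).symm)
  -- G4
  · intro j k hkj
    simp only [inv_inv]
    have hca : j.rev < k.rev := Fin.rev_lt_rev.mpr hkj
    set a := k.rev
    set c := j.rev
    have C4ac : r₁ a * r₂ c * (r₁ a)⁻¹ =
        (z⁻¹ * r₂ c * (r₂ a)⁻¹ * z * r₂ a * (r₂ c)⁻¹) * r₂ c :=
      conj_of_comm (h4 a c hca)
    have hc4 : (r₁ c)⁻¹ * z⁻¹ * r₁ c = r₂ c * z⁻¹ * (r₂ c)⁻¹ :=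
      inv_conj_of_conj (C8' c) (commR c)
    refine comm_of_conj (Eq.symm ?_)
    calc (z * r₁ a * (r₁ c)⁻¹ * z⁻¹ * r₁ c * (r₁ a)⁻¹) * r₁ a
        = z * r₁ a * ((r₁ c)⁻¹ * z⁻¹ * r₁ c) := by group
      _ = z * r₁ a * (r₂ c * z⁻¹ * (r₂ c)⁻¹) := by rw [hc4]
      _ = z * ((r₁ a * r₂ c * (r₁ a)⁻¹) * r₁ a) * z⁻¹ * (r₂ c)⁻¹ := by group
      _ = z * (((z⁻¹ * r₂ c * (r₂ a)⁻¹ * z * r₂ a * (r₂ c)⁻¹) * r₂ c) * r₁ a) * z⁻¹ *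
            (r₂ c)⁻¹ := by rw [C4ac]
      _ = r₂ c * ((r₂ a)⁻¹ * z * r₂ a) * (r₁ a * z⁻¹ * (r₂ c)⁻¹) := by group
      _ = r₂ c * (r₁ a * z * (r₁ a)⁻¹) * (r₁ a * z⁻¹ * (r₂ c)⁻¹) := by rw [C8]
      _ = r₂ c * r₁ a * (r₂ c)⁻¹ := by group
  -- G5
  · intro j k hjk
    exact commutatorElement_eq_one_iff_commute.mpr
      ((commutatorElement_eq_one_iff_commute.mp
        (h9 k.rev j.rev (Fin.rev_lt_rev.mpr hjk))).symm.inv_right)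
  -- G6
  · intro j
    simp only [inv_inv]
    set a := j.rev
    have C10a : t₁ a * r₂ a * (t₁ a)⁻¹ = ((t₂ a)⁻¹ * z * t₂ a) * r₂ a :=
      conj_of_comm (h10 a)
    refine comm_of_conj ?_
    calc r₂ a * (t₁ a)⁻¹ * (r₂ a)⁻¹
        = (t₁ a)⁻¹ * ((t₁ a * r₂ a * (t₁ a)⁻¹) * (r₂ a)⁻¹) := by group
      _ = (t₁ a)⁻¹ * ((((t₂ a)⁻¹ * z * t₂ a) * r₂ a) * (r₂ a)⁻¹) := by rw [C10a]
      _ = (t₁ a)⁻¹ * ((t₂ a)⁻¹ * z * t₂ a) := by group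
      _ = (t₁ a)⁻¹ * (t₁ a * z * (t₁ a)⁻¹) := by rw [C15]
      _ = z * (t₁ a)⁻¹ := by group
  -- G7
  · intro j k hkj
    simp only [inv_inv]
    have hca : j.rev < k.rev := Fin.rev_lt_rev.mpr hkj
    set a := k.rev
    set c := j.rev
    have C11ac : t₁ a * r₂ c * (t₁ a)⁻¹ = ((t₂ a)⁻¹ * z * t₂ a * z⁻¹) * r₂ c :=
      (conj_of_comm (h11 a c hca)).trans (by rw [commutatorElement_def]; group)
    refine comm_eq_comm_of_conj ?_
    calc r₂ c * (t₁ a)⁻¹ * (r₂ c)⁻¹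
        = (t₁ a)⁻¹ * ((t₁ a * r₂ c * (t₁ a)⁻¹) * (r₂ c)⁻¹) := by group
      _ = (t₁ a)⁻¹ * ((((t₂ a)⁻¹ * z * t₂ a * z⁻¹) * r₂ c) * (r₂ c)⁻¹) := by rw [C11ac]
      _ = (t₁ a)⁻¹ * ((t₂ a)⁻¹ * z * t₂ a) * z⁻¹ := by group
      _ = (t₁ a)⁻¹ * (t₁ a * z * (t₁ a)⁻¹) * z⁻¹ := by rw [C15]
      _ = z * (t₁ a)⁻¹ * z⁻¹ := by group
  -- G8
  · intro j
    set a := j.rev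
    have key : (r₁ a)⁻¹ * z⁻¹ * r₁ a = r₂ a * z⁻¹ * (r₂ a)⁻¹ :=
      inv_conj_of_conj (C8' a) (commR a)
    refine comm_eq_comm_of_conj ?_
    calc r₂ a * z⁻¹ * (r₂ a)⁻¹ = (r₁ a)⁻¹ * z⁻¹ * r₁ a := key.symm
      _ = (r₁ a)⁻¹ * z⁻¹ * ((r₁ a)⁻¹)⁻¹ := by group
  -- G9
  · intro j k hjk
    exact commutatorElement_eq_one_iff_commute.mpr
      ((commutatorElement_eq_one_iff_commute.mp
        (h5 k.rev j.rev (Fin.rev_lt_rev.mpr hjk))).symm.inv_left)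
  -- G10
  · intro j
    simp only [inv_inv]
    set a := j.rev
    have C6a : r₁ a * t₂ a * (r₁ a)⁻¹ = z⁻¹ * t₂ a := conj_of_comm (h6 a)
    refine comm_of_conj ?_
    calc (t₂ a)⁻¹ * r₁ a * ((t₂ a)⁻¹)⁻¹
        = (t₂ a)⁻¹ * ((r₁ a * t₂ a * (r₁ a)⁻¹) * r₁ a) := by group
      _ = (t₂ a)⁻¹ * ((z⁻¹ * t₂ a) * r₁ a) := by rw [C6a]
      _ = ((t₂ a)⁻¹ * z⁻¹ * t₂ a) * r₁ a := by group
      _ = (t₁ a * z⁻¹ * (t₁ a)⁻¹) * r₁ a := by rw [C15']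
  -- G11
  · intro j k hkj
    simp only [inv_inv]
    have hca : j.rev < k.rev := Fin.rev_lt_rev.mpr hkj
    set a := k.rev
    set c := j.rev
    have C7ac : r₁ a * t₂ c * (r₁ a)⁻¹ = z⁻¹ * t₂ c * z :=
      (conj_of_comm (h7 a c hca)).trans (by rw [commutatorElement_def]; group)
    have hL : ⁅(t₂ c)⁻¹, r₁ a⁆ = (t₂ c)⁻¹ * z⁻¹ * t₂ c * z := by
      refine comm_of_conj ?_
      calc (t₂ c)⁻¹ * r₁ a * ((t₂ c)⁻¹)⁻¹
          = (t₂ c)⁻¹ * ((r₁ a * t₂ c * (r₁ a)⁻¹) * r₁ a) := by group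
        _ = (t₂ c)⁻¹ * ((z⁻¹ * t₂ c * z) * r₁ a) := by rw [C7ac]
        _ = ((t₂ c)⁻¹ * z⁻¹ * t₂ c * z) * r₁ a := by group
    have hR : ⁅t₁ c, z⁻¹⁆ = (t₂ c)⁻¹ * z⁻¹ * t₂ c * z := by
      refine comm_of_conj ?_
      calc t₁ c * z⁻¹ * (t₁ c)⁻¹ = (t₂ c)⁻¹ * z⁻¹ * t₂ c := C15' c
        _ = ((t₂ c)⁻¹ * z⁻¹ * t₂ c * z) * z⁻¹ := by group
    rw [hL, hR]
  -- G12
  · intro j k hjk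
    exact commutatorElement_eq_one_iff_commute.mpr
      ((commutatorElement_eq_one_iff_commute.mp
        (h12 k.rev j.rev (Fin.rev_lt_rev.mpr hjk))).symm.inv_left.inv_right)
  -- G13
  · intro j
    simp only [inv_inv]
    set a := j.rev
    have C13a : t₁ a * t₂ a * (t₁ a)⁻¹ = (t₂ a)⁻¹ * z * t₂ a * z⁻¹ * t₂ a :=
      (conj_of_comm (h13 a)).trans (by rw [commutatorElement_def]; group)
    have Q : t₁ a * (z⁻¹ * t₂ a * z) * (t₁ a)⁻¹ = t₂ a := by
      calc t₁ a * (z⁻¹ * t₂ a * z) * (t₁ a)⁻¹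
          = (t₁ a * z⁻¹ * (t₁ a)⁻¹) * (t₁ a * t₂ a * (t₁ a)⁻¹) * (t₁ a * z * (t₁ a)⁻¹) := by
            group
        _ = ((t₂ a)⁻¹ * z⁻¹ * t₂ a) * ((t₂ a)⁻¹ * z * t₂ a * z⁻¹ * t₂ a) *
              ((t₂ a)⁻¹ * z * t₂ a) := by rw [C15', C13a, C15]
        _ = t₂ a := by group
    have hL : ⁅(t₂ a)⁻¹, (t₁ a)⁻¹⁆ = (t₂ a)⁻¹ * z⁻¹ * t₂ a * z := by
      refine comm_of_conj ?_
      calc (t₂ a)⁻¹ * (t₁ a)⁻¹ * ((t₂ a)⁻¹)⁻¹ = (t₂ a)⁻¹ * (t₁ a)⁻¹ * t₂ a := by group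
        _ = (t₂ a)⁻¹ * (t₁ a)⁻¹ * (t₁ a * (z⁻¹ * t₂ a * z) * (t₁ a)⁻¹) := by rw [Q]
        _ = ((t₂ a)⁻¹ * z⁻¹ * t₂ a * z) * (t₁ a)⁻¹ := by group
    have hR : ⁅t₁ a, z⁻¹⁆ = (t₂ a)⁻¹ * z⁻¹ * t₂ a * z := by
      refine comm_of_conj ?_
      calc t₁ a * z⁻¹ * (t₁ a)⁻¹ = (t₂ a)⁻¹ * z⁻¹ * t₂ a := C15' a
        _ = ((t₂ a)⁻¹ * z⁻¹ * t₂ a * z) * z⁻¹ := by group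
    rw [hL, hR]
  -- G14
  · intro j k hkj
    simp only [inv_inv]
    have hca : j.rev < k.rev := Fin.rev_lt_rev.mpr hkj
    set a := k.rev
    set c := j.rev
    have C14ac : t₁ a * t₂ c * (t₁ a)⁻¹ =
        ((t₂ a)⁻¹ * z * t₂ a * z⁻¹ * t₂ c * z * (t₂ a)⁻¹ * z⁻¹ * t₂ a * (t₂ c)⁻¹) * t₂ c :=
      conj_of_comm (h14 a c hca)
    have K : t₁ a * (z⁻¹ * t₂ c * z) * (t₁ a)⁻¹ = z⁻¹ * t₂ c * z := by
      calc t₁ a * (z⁻¹ * t₂ c * z) * (t₁ a)⁻¹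
          = (t₁ a * z⁻¹ * (t₁ a)⁻¹) * (t₁ a * t₂ c * (t₁ a)⁻¹) * (t₁ a * z * (t₁ a)⁻¹) := by
            group
        _ = ((t₂ a)⁻¹ * z⁻¹ * t₂ a) *
              (((t₂ a)⁻¹ * z * t₂ a * z⁻¹ * t₂ c * z * (t₂ a)⁻¹ * z⁻¹ * t₂ a * (t₂ c)⁻¹) *
                t₂ c) * ((t₂ a)⁻¹ * z * t₂ a) := by rw [C15', C14ac, C15]
        _ = z⁻¹ * t₂ c * z := by group
    refine comm_of_conj (mul_left_cancel (a := t₁ a) ?_)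
    calc t₁ a * ((t₂ c)⁻¹ * (t₁ a)⁻¹ * ((t₂ c)⁻¹)⁻¹)
        = (t₁ a * t₂ c * (t₁ a)⁻¹)⁻¹ * t₂ c := by group
      _ = (((t₂ a)⁻¹ * z * t₂ a * z⁻¹ * t₂ c * z * (t₂ a)⁻¹ * z⁻¹ * t₂ a * (t₂ c)⁻¹) *
            t₂ c)⁻¹ * t₂ c := by rw [C14ac]
      _ = (((t₂ a)⁻¹ * z * t₂ a * z⁻¹ * t₂ c * z * (t₂ a)⁻¹ * z⁻¹ * t₂ a * (t₂ c)⁻¹) *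
            t₂ c)⁻¹ * (z⁻¹ * t₂ c * z) * (z⁻¹ * (t₂ c)⁻¹ * z * t₂ c) := by group
      _ = (((t₂ a)⁻¹ * z * t₂ a * z⁻¹ * t₂ c * z * (t₂ a)⁻¹ * z⁻¹ * t₂ a * (t₂ c)⁻¹) *
            t₂ c)⁻¹ * (t₁ a * (z⁻¹ * t₂ c * z) * (t₁ a)⁻¹) *
            (z⁻¹ * (t₂ c)⁻¹ * z * t₂ c) := by rw [K]
      _ = (t₁ a * t₂ c * (t₁ a)⁻¹)⁻¹ * (t₁ a * (z⁻¹ * t₂ c * z) * (t₁ a)⁻¹) *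
            (z⁻¹ * (t₂ c)⁻¹ * z * t₂ c) := by rw [C14ac]
      _ = t₁ a * ((((t₂ c)⁻¹ * z⁻¹ * t₂ c) * (z * (t₁ a)⁻¹ * z⁻¹) * ((t₂ c)⁻¹ * z * t₂ c) *
            t₁ a) * (t₁ a)⁻¹) := by group
      _ = t₁ a * (((t₁ c * z⁻¹ * (t₁ c)⁻¹) * (z * (t₁ a)⁻¹ * z⁻¹) * (t₁ c * z * (t₁ c)⁻¹) *
            t₁ a) * (t₁ a)⁻¹) := by rw [C15', C15]
      _ = t₁ a * ((t₁ c * z⁻¹ * (t₁ c)⁻¹ * z * (t₁ a)⁻¹ * z⁻¹ * t₁ c * z * (t₁ c)⁻¹ * t₁ a) *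
            (t₁ a)⁻¹) := by group
  -- G15
  · intro j
    simp only [inv_inv]
    set a := j.rev
    refine comm_eq_comm_of_conj ?_
    calc (t₂ a)⁻¹ * z⁻¹ * ((t₂ a)⁻¹)⁻¹ = (t₂ a)⁻¹ * z⁻¹ * t₂ a := by group
      _ = t₁ a * z⁻¹ * (t₁ a)⁻¹ := (C15' a).symm
end

section
/- Let b ≥ 2 and n ≥ 2 be integers, set 𝔫 = 1 − 1/n ∈ ℚ and s = (2𝔫 − 𝔫²)/(2b − 2 + 𝔫) ∈ ℚ. Then s > 0, the rational number (s + 2)² − 8bs is the square of a rational number, and s < 6 − 4√2. -/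
/-!
Clearing denominators in `s (2b - 2 + 𝔫) = 2𝔫 - 𝔫²` with `𝔫 = 1 - 1/n` shows that `n` is a
root of `(2bs - s - 1) X² - s X + 1`, so the discriminant `(s + 2)² - 8bs` of that quadratic is
a rational square. Since `b ≥ 2`, `s ≤ 𝔫 (2 - 𝔫) / (2 + 𝔫)`, and
`6 - 4√2 - 𝔫 (2 - 𝔫) / (2 + 𝔫) = (𝔫 - (2√2 - 2))² / (2 + 𝔫)`, which is positive because
`𝔫` is rational and `2√2 - 2` is not.
-/

lemma one_sub_one_div_mem_Ioo {K : Type*} [Field K] [LinearOrder K] [IsStrictOrderedRing K]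
    {n : K} (hn : 2 ≤ n) : 1 - 1 / n ∈ Set.Ioo (0 : K) 1 := by
  have hn_inv_pos : 0 < 1 / n := by positivity
  have hn_inv_le : 1 / n ≤ 1 / 2 := one_div_le_one_div_of_le two_pos hn
  constructor <;> linarith

section SlopeBounds

variable {K : Type*} [Field K] [LinearOrder K] [IsStrictOrderedRing K] {b f : K}

lemma slope_pos (hb : 1 ≤ b) (hf₀ : 0 < f) (hf₂ : f < 2) :
    0 < (2 * f - f ^ 2) / (2 * b - 2 + f) :=
  div_pos (by nlinarith) (by linarith)

lemma slope_le_of_two_le (hb : 2 ≤ b) (hf₀ : 0 < f) (hf₂ : f < 2) :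
    (2 * f - f ^ 2) / (2 * b - 2 + f) ≤ (2 * f - f ^ 2) / (2 + f) :=
  div_le_div_of_nonneg_left (by nlinarith) (by linarith) (by linarith)

end SlopeBounds

lemma quadratic_eq_zero_of_slope {K : Type*} [Field K] {b n s : K} (hn : n ≠ 0)
    (hs : s * (2 * b - 2 + (1 - 1 / n)) = 2 * (1 - 1 / n) - (1 - 1 / n) ^ 2) :
    (2 * b * s - s - 1) * (n * n) + -s * n + 1 = 0 := by
  field_simp at hs
  linear_combination hs

lemma sqrt_two_mul_two_sub_two_ne_ratCast (q : ℚ) : 2 * Real.sqrt 2 - 2 ≠ q :=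
  ((irrational_sqrt_two.natCast_mul two_ne_zero).sub_natCast 2).ne_rat q

lemma mul_two_sub_div_two_add_lt {x : ℝ} (hx : -2 < x) (hne : x ≠ 2 * Real.sqrt 2 - 2) :
    (2 * x - x ^ 2) / (2 + x) < 6 - 4 * Real.sqrt 2 := by
  have hsqrt : Real.sqrt 2 ^ 2 = 2 := Real.sq_sqrt zero_le_two
  have hgap : 0 < (x - (2 * Real.sqrt 2 - 2)) ^ 2 := pow_two_pos_of_ne_zero (sub_ne_zero.mpr hne)
  rw [div_lt_iff₀ (by linarith)]
  nlinarith

/-- Proposition `prop:slope-diagonal`, arithmetic content: for integers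
`b, n ≥ 2`, setting `𝔫 = 1 - 1/n` and `s = (2𝔫 - 𝔫²)/(2b - 2 + 𝔫)` in `ℚ`, one has `s > 0`,
the rational number `(s + 2)² - 8bs` is a square in `ℚ`, and `s < 6 - 4√2`. -/
theorem stmt_16 (b n : ℕ) (hb : 2 ≤ b) (hn : 2 ≤ n)
    (f s : ℚ) (hf : f = 1 - 1 / (n : ℚ))
    (hs : s = (2 * f - f ^ 2) / (2 * (b : ℚ) - 2 + f)) :
    0 < s ∧
    (∃ q : ℚ, (s + 2) ^ 2 - 8 * (b : ℚ) * s = q ^ 2) ∧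
    (s : ℝ) < 6 - 4 * Real.sqrt 2 := by
  have hbQ : (2 : ℚ) ≤ b := by exact_mod_cast hb
  obtain ⟨hf₀, hf₁⟩ : f ∈ Set.Ioo 0 1 := hf ▸ one_sub_one_div_mem_Ioo (by exact_mod_cast hn)
  have hden : 2 * (b : ℚ) - 2 + f ≠ 0 := by linarith
  refine ⟨hs ▸ slope_pos (by linarith) hf₀ (by linarith), ?_, ?_⟩
  · have hroot := quadratic_eq_zero_of_slope (b := (b : ℚ)) (s := s)
      (by positivity : (n : ℚ) ≠ 0) (hf ▸ hs ▸ div_mul_cancel₀ _ hden)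
    refine ⟨_, Eq.trans ?_ (discrim_eq_sq_of_quadratic_eq_zero hroot)⟩
    rw [discrim]
    ring
  · have hle : s ≤ (2 * f - f ^ 2) / (2 + f) := hs ▸ slope_le_of_two_le hbQ hf₀ (by linarith)
    calc (s : ℝ) ≤ (2 * (f : ℝ) - (f : ℝ) ^ 2) / (2 + f) := by exact_mod_cast hle
      _ < 6 - 4 * Real.sqrt 2 :=
        mul_two_sub_div_two_add_lt (by linarith [(Rat.cast_pos (K := ℝ)).mpr hf₀])
          (sqrt_two_mul_two_sub_two_ne_ratCast f).symm
end
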